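/- arXiv:1502.02137 — 7 statements merged into one kernel-verified Lean document; each statement's English description precedes it below -/
import Mathlib

section
/- Let Q be a quadratic form in m variables over 𝔽_p of rank r. Then ∑_{y ∈ 𝔽_p \ {0}} ∑_{x ∈ 𝔽_p^m} ζ_p^{y·Q(x)} equals ε·(p-1)·p^{m-r/2} for some ε ∈ {1,-1} when r is even, and equals 0 when r is odd. -/
/-- `ζ_p^a = exp(2πi·ā/p)` for `a ∈ 𝔽_p`, where `ā ∈ {0,…,p-1}` lifts `a`. -/
noncomputable def zetaC (p : ℕ) (a : ZMod p) : ℂ :=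
  Complex.exp (2 * Real.pi * Complex.I * (a.val : ℂ) / (p : ℂ))

/-!
Since `p` is odd, `Q` is isometric to a diagonal form `∑ wᵢ xᵢ²`, and the inner sum factors over
the coordinates into one-variable sums `∑ₜ ζ^{c t²}`. These equal `p` for `c = 0` and `χ(c) g`
otherwise, where `χ` is the quadratic character and `g` the quadratic Gauss sum. If `r` weights
are nonzero, with product `d`, the inner sum is therefore `χ(yʳ d) gʳ p^{m-r}`. Summing over
`y ≠ 0` gives `0` when `r` is odd, because then `χ(yʳ) = χ(y)` and `χ` has mean zero, and
`(p - 1) χ(d) gʳ p^{m-r}` when `r` is even, which `g² = χ(-1) p` turns into `±(p - 1) p^{m-r/2}`.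
-/

open Finset QuadraticMap

lemma AddChar.map_sum_eq_prod {A M ι : Type*} [AddCommMonoid A] [CommMonoid M]
    (ψ : AddChar A M) (s : Finset ι) (f : ι → A) : ψ (∑ i ∈ s, f i) = ∏ i ∈ s, ψ (f i) := by
  induction s using Finset.cons_induction with
  | empty => simp
  | cons a s ha ih => rw [sum_cons, prod_cons, map_add_eq_mul, ih]

lemma AddChar.sum_weightedSumSquares {F R ι : Type*} [CommRing F] [Fintype F] [CommRing R]
    [Fintype ι] [DecidableEq ι] (ψ : AddChar F R) (w : ι → F) :
    ∑ x : ι → F, ψ (weightedSumSquares F w x) = ∏ i, ∑ t, ψ (w i * t ^ 2) := by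
  simp only [weightedSumSquares_apply, smul_eq_mul, ψ.map_sum_eq_prod, Fintype.prod_sum,
    _root_.sq]

/-- Mathlib's `quadraticChar F` is `ℤ`-valued; Gauss sums need it with values in the ring `R` of
the additive character. -/
noncomputable def quadraticCharIn (F R : Type*) [Field F] [Fintype F] [DecidableEq F]
    [CommRing R] : MulChar F R :=
  (quadraticChar F).ringHomComp (Int.castRingHom R)

section QuadraticChar

variable {F R : Type*} [Field F] [Fintype F] [DecidableEq F] [CommRing R]

@[simp]
lemma quadraticCharIn_apply (a : F) : quadraticCharIn F R a = quadraticChar F a := rfl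

theorem AddChar.sum_mul_sq [IsDomain R] (hF : ringChar F ≠ 2) {ψ : AddChar F R}
    (hψ : ψ.IsPrimitive) {c : F} (hc : c ≠ 0) :
    ∑ t, ψ (c * t ^ 2) = quadraticCharIn F R c * gaussSum (quadraticCharIn F R) ψ := by
  have hsqrts (a : F) : (#{t | t ^ 2 = a} : R) = quadraticChar F a + 1 := by
    have := quadraticChar_card_sqrts hF a
    rw [Set.toFinset_ofPred] at this
    exact_mod_cast congrArg (Int.cast : ℤ → R) this
  calc ∑ t, ψ (c * t ^ 2)
      = ∑ a, ∑ t with t ^ 2 = a, ψ (c * a) :=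
        (sum_fiberwise' univ (· ^ 2) fun a ↦ ψ (c * a)).symm
    _ = gaussSum (quadraticCharIn F R) (ψ.mulShift c) + ∑ a, ψ (a * c) := by
        rw [gaussSum, ← sum_add_distrib]
        refine sum_congr rfl fun a _ ↦ ?_
        rw [sum_const, nsmul_eq_mul, hsqrts, mulShift_apply, quadraticCharIn_apply, mul_comm a c]
        ring
    _ = quadraticCharIn F R c * gaussSum (quadraticCharIn F R) ψ := by
        rw [sum_mulShift c hψ, if_neg hc, Nat.cast_zero, add_zero,
          ← gaussSum_mulShift _ ψ (Units.mk0 c hc), Units.val_mk0, ← mul_assoc, ← map_mul, quadraticCharIn_apply, ← pow_two,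
          quadraticChar_sq_one' hc, Int.cast_one, one_mul]

theorem AddChar.sum_mul_weightedSumSquares [IsDomain R] {ι : Type*} [Fintype ι] [DecidableEq ι]
    (hF : ringChar F ≠ 2) {ψ : AddChar F R} (hψ : ψ.IsPrimitive) (w : ι → F) {y : F}
    (hy : y ≠ 0) :
    ∑ x : ι → F, ψ (y * weightedSumSquares F w x) =
      quadraticCharIn F R (y ^ #{i | w i ≠ 0} * ∏ i with w i ≠ 0, w i) *
        gaussSum (quadraticCharIn F R) ψ ^ #{i | w i ≠ 0} * Fintype.card F ^ #{i | w i = 0} := by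
  set g := gaussSum (quadraticCharIn F R) ψ
  calc ∑ x : ι → F, ψ (y * weightedSumSquares F w x)
      = ∑ x : ι → F, ψ (weightedSumSquares F (y • w) x) := by
        simp only [weightedSumSquares_apply, smul_eq_mul, mul_sum, Pi.smul_apply, mul_assoc]
    _ = ∏ i, ∑ t, ψ (y * w i * t ^ 2) := ψ.sum_weightedSumSquares _
    _ = (∏ i with w i ≠ 0, quadraticCharIn F R (y * w i) * g) *
          ∏ i with ¬ w i ≠ 0, (Fintype.card F : R) := by
        rw [← prod_filter_mul_prod_filter_not univ (fun i ↦ w i ≠ 0)]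
        congr 1 <;> refine prod_congr rfl fun i hi ↦ ?_ <;> simp only [mem_filter] at hi
        · exact ψ.sum_mul_sq hF hψ (mul_ne_zero hy hi.2)
        · simp [not_not.mp hi.2]
    _ = _ := by
        simp only [prod_mul_distrib, ← map_prod, prod_const, not_not]

theorem gaussSum_quadraticCharIn_sq [IsDomain R] [CharZero R] (hF : ringChar F ≠ 2)
    {ψ : AddChar F R} (hψ : ψ.IsPrimitive) :
    gaussSum (quadraticCharIn F R) ψ ^ 2 = quadraticCharIn F R (-1) * Fintype.card F :=
  gaussSum_sq ((MulChar.ringHomComp_ne_one_iff (RingHom.injective_int _)).mpr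
    (quadraticChar_ne_one hF)) ((quadraticChar_isQuadratic F).comp _) hψ

theorem quadraticChar_sum_units_pow_mul_of_even {s : ℕ} (hs : Even s) (d : F) :
    ∑ y ∈ ({0}ᶜ : Finset F), quadraticChar F (y ^ s * d) =
      quadraticChar F d * (Fintype.card F - 1) := by
  obtain ⟨k, rfl⟩ := hs
  have hterm (y : F) (hy : y ∈ ({0}ᶜ : Finset F)) :
      quadraticChar F (y ^ (k + k) * d) = quadraticChar F d := by
    rw [map_mul, ← two_mul, pow_mul', quadraticChar_sq_one' (pow_ne_zero _ (by simpa using hy)),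
      one_mul]
  rw [sum_congr rfl hterm, sum_const, card_compl, card_singleton, nsmul_eq_mul,
    Nat.cast_sub Fintype.card_pos, Nat.cast_one, mul_comm]

theorem quadraticChar_sum_units_pow_mul_of_odd (hF : ringChar F ≠ 2) {s : ℕ} (hs : Odd s)
    (d : F) : ∑ y ∈ ({0}ᶜ : Finset F), quadraticChar F (y ^ s * d) = 0 := by
  have hpow (y : F) : quadraticChar F (y ^ s) = quadraticChar F y := by
    rw [map_pow, ← MulChar.pow_apply' _ hs.pos.ne', (quadraticChar_isQuadratic F).pow_odd hs]
  have hsplit := sum_compl_add_sum {0} fun y ↦ quadraticChar F (y ^ s * d)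
  rw [sum_singleton, zero_pow hs.pos.ne', zero_mul, MulChar.map_zero, add_zero] at hsplit
  rw [hsplit]
  simp only [map_mul, hpow, ← sum_mul, quadraticChar_sum_zero hF, zero_mul]

end QuadraticChar

namespace QuadraticForm

variable {K M : Type*} [Field K] [AddCommGroup M] [Module K M]

noncomputable def rank (Q : QuadraticForm K M) : ℕ :=
  Module.finrank K M - Module.finrank K (LinearMap.ker (polarBilin Q))

theorem rank_of_equiv_weightedSumSquares [NeZero (2 : K)] [DecidableEq K] {ι : Type*} [Fintype ι]
    {Q : QuadraticForm K M} {w : ι → K} (hQ : Equivalent Q (weightedSumSquares K w)) :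
    Q.rank = #{i | w i ≠ 0} := by
  have : Invertible (2 : K) := invertibleOfNonzero two_ne_zero
  have hcard := card_filter_add_card_filter_not (s := univ) (fun i ↦ w i = 0)
  rw [rank, ← radical_eq_ker_polarBilin, finrank_radical_of_equiv_weightedSumSquares hQ,
    hQ.some.toLinearEquiv.finrank_eq, Module.finrank_fintype_fun_eq_card,
    Set.ncard_eq_toFinset_card', Set.toFinset_ofPred, ← card_univ, ← hcard]
  exact Nat.add_sub_cancel_left _ _

section ExponentialSum

variable {F R M : Type*} [Field F] [Fintype F] [DecidableEq F] [CommRing R] [IsDomain R]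
  [AddCommGroup M] [Module F M] [Fintype M]

theorem exists_sum_addChar_mul_eq (hF : ringChar F ≠ 2) {ψ : AddChar F R}
    (hψ : ψ.IsPrimitive) (Q : QuadraticForm F M) :
    ∃ d ≠ 0, ∀ y ≠ 0, ∑ x, ψ (y * Q x) =
      quadraticCharIn F R (y ^ Q.rank * d) * gaussSum (quadraticCharIn F R) ψ ^ Q.rank *
        Fintype.card F ^ (Module.finrank F M - Q.rank) := by
  have : Invertible (2 : F) := invertibleOfNonzero (Ring.two_ne_zero hF)
  have : NeZero (2 : F) := ⟨Ring.two_ne_zero hF⟩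
  obtain ⟨w, ⟨e⟩⟩ := Q.equivalent_weightedSumSquares
  have hrank : Q.rank = #{i | w i ≠ 0} := rank_of_equiv_weightedSumSquares ⟨e⟩
  have hcorank : Module.finrank F M - Q.rank = #{i | w i = 0} := by
    have hcard := card_filter_add_card_filter_not (s := univ) (fun i ↦ w i ≠ 0)
    simp only [not_not, card_univ, Fintype.card_fin] at hcard
    omega
  refine ⟨∏ i with w i ≠ 0, w i, prod_ne_zero_iff.mpr fun i hi ↦ (mem_filter.mp hi).2,
    fun y hy ↦ ?_⟩
  rw [hcorank, hrank, ← ψ.sum_mul_weightedSumSquares hF hψ w hy]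
  exact Fintype.sum_equiv e.toLinearEquiv.toEquiv _ _ fun x ↦ by simp [e.map_app]

theorem sum_units_sum_addChar_mul_of_even [CharZero R] (hF : ringChar F ≠ 2)
    {ψ : AddChar F R} (hψ : ψ.IsPrimitive) (Q : QuadraticForm F M) (hQ : Even Q.rank) :
    ∃ a ≠ (0 : F), ∑ y ∈ ({0}ᶜ : Finset F), ∑ x, ψ (y * Q x) =
      quadraticCharIn F R a * (Fintype.card F - 1) *
        Fintype.card F ^ (Module.finrank F M - Q.rank / 2) := by
  obtain ⟨d, hd, hsum⟩ := Q.exists_sum_addChar_mul_eq hF hψ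
  set r := Q.rank
  set n := Module.finrank F M
  have hexp : n - r / 2 = r / 2 + (n - r) := by
    have : r ≤ n := Nat.sub_le _ _
    have := Nat.even_iff.mp hQ
    omega
  have hg : gaussSum (quadraticCharIn F R) ψ ^ r =
      quadraticCharIn F R ((-1) ^ (r / 2)) * Fintype.card F ^ (r / 2) := by
    rw [← Nat.two_mul_div_two_of_even hQ, pow_mul, gaussSum_quadraticCharIn_sq hF hψ, mul_pow,
      map_pow, Nat.mul_div_cancel_left _ two_pos]
  refine ⟨d * (-1) ^ (r / 2), mul_ne_zero hd (pow_ne_zero _ (neg_ne_zero.mpr one_ne_zero)), ?_⟩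
  calc ∑ y ∈ ({0}ᶜ : Finset F), ∑ x, ψ (y * Q x)
      = ((∑ y ∈ ({0}ᶜ : Finset F), quadraticChar F (y ^ r * d) : ℤ) : R) *
          gaussSum (quadraticCharIn F R) ψ ^ r * Fintype.card F ^ (n - r) := by
        rw [Int.cast_sum, sum_mul, sum_mul]
        exact sum_congr rfl fun y hy ↦ hsum y (by simpa using hy)
    _ = _ := by
        rw [quadraticChar_sum_units_pow_mul_of_even hQ, hg, hexp, map_mul, pow_add]
        push_cast
        simp only [quadraticCharIn_apply]
        ring

theorem sum_units_sum_addChar_mul_of_odd (hF : ringChar F ≠ 2)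
    {ψ : AddChar F R} (hψ : ψ.IsPrimitive) (Q : QuadraticForm F M) (hQ : Odd Q.rank) :
    ∑ y ∈ ({0}ᶜ : Finset F), ∑ x, ψ (y * Q x) = 0 := by
  obtain ⟨d, -, hsum⟩ := Q.exists_sum_addChar_mul_eq hF hψ
  rw [sum_congr rfl fun y hy ↦ hsum y (by simpa using hy), ← sum_mul, ← sum_mul]
  simp only [quadraticCharIn_apply, ← Int.cast_sum, quadraticChar_sum_units_pow_mul_of_odd hF hQ,
    Int.cast_zero, zero_mul]

end ExponentialSum

end QuadraticForm

theorem stmt_1_general (p : ℕ) [Fact p.Prime] (hp : Odd p) (m r : ℕ)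
    (Q : QuadraticForm (ZMod p) (Fin m → ZMod p))
    (hr : r = m - Module.finrank (ZMod p)
      (LinearMap.ker (QuadraticMap.polarBilin Q))) :
    (Even r → ∃ ε : ℤ, (ε = 1 ∨ ε = -1) ∧
      ∑ y ∈ ({0}ᶜ : Finset (ZMod p)), ∑ x : Fin m → ZMod p, zetaC p (y * Q x)
        = (ε : ℂ) * ((p : ℂ) - 1) * (p : ℂ) ^ (m - r / 2)) ∧
    (Odd r →
      ∑ y ∈ ({0}ᶜ : Finset (ZMod p)), ∑ x : Fin m → ZMod p, zetaC p (y * Q x) = 0) := by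
  have hF : ringChar (ZMod p) ≠ 2 := by
    rw [ZMod.ringChar_zmod_n]
    rintro rfl
    exact Nat.not_odd_iff_even.mpr even_two hp
  have hζ (a : ZMod p) : zetaC p a = ZMod.stdAddChar a := by
    rw [ZMod.stdAddChar_apply, ZMod.toCircle_apply, zetaC]
  have hψ := ZMod.isPrimitive_stdAddChar p
  obtain rfl : r = Q.rank := by rw [hr, QuadraticForm.rank, Module.finrank_fin_fun]
  simp only [hζ]
  refine ⟨fun he ↦ ?_, Q.sum_units_sum_addChar_mul_of_odd hF hψ⟩
  obtain ⟨a, ha, hsum⟩ := Q.sum_units_sum_addChar_mul_of_even hF hψ he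
  refine ⟨quadraticChar (ZMod p) a, quadraticChar_dichotomy ha, ?_⟩
  rw [hsum, ZMod.card, Module.finrank_fin_fun, quadraticCharIn_apply]

/-- Lemma 2.2: For a quadratic form `Q` in `m` variables over `𝔽_p` of rank `r`,
the sum `∑_{y ∈ 𝔽_p*} ∑_{x ∈ 𝔽_p^m} ζ_p^{yQ(x)}` is `±(p-1)p^{m-r/2}` when `r`
is even, and `0` when `r` is odd.  The rank `r` is `m` minus the dimension of
the radical of the polar bilinear form of `Q`. -/
theorem stmt_1 (p : ℕ) [Fact p.Prime] (hp : Odd p) (m r : ℕ) (hm : 0 < m)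
    (Q : QuadraticForm (ZMod p) (Fin m → ZMod p))
    (hr : r = m - Module.finrank (ZMod p)
      (LinearMap.ker (QuadraticMap.polarBilin Q))) :
    (Even r → ∃ ε : ℤ, (ε = 1 ∨ ε = -1) ∧
      ∑ y ∈ ({0}ᶜ : Finset (ZMod p)), ∑ x : Fin m → ZMod p, zetaC p (y * Q x)
        = (ε : ℂ) * ((p : ℂ) - 1) * (p : ℂ) ^ (m - r / 2)) ∧
    (Odd r →
      ∑ y ∈ ({0}ᶜ : Finset (ZMod p)), ∑ x : Fin m → ZMod p, zetaC p (y * Q x) = 0) :=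
  stmt_1_general p hp m r Q hr
end

section
/- For any (u,v,w) ∈ F³ with (u,v,w) ≠ (0,0,0), the quadratic form Q_{u,v,w}(x) = Tr(u x² + v x^{d₁} + w x^{d₂}) on F has rank at least m − 4 over 𝔽_p; equivalently, the 𝔽_p-subspace V = {x ∈ F : Q_{u,v,w}(x+z) − Q_{u,v,w}(x) − Q_{u,v,w}(z) = 0 for all z ∈ F} has cardinality at most p⁴. -/
/-!
With σ = (x ↦ x ^ p ^ k), the trace is σ-invariant, so the polar form of `Q` is
`(x, z) ↦ Tr (G x * z)` with `G x = 2ux + vσx + σ⁻¹(vx) + wσ²x + σ⁻²(wx)`. The trace form is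
nondegenerate, so the radical is the kernel of `G`, i.e. of `σ² ∘ G`, which is a σ-linearized
polynomial `∑_{i ≤ 4} aᵢ σⁱ` with some `aᵢ ≠ 0`. Since `gcd(m, k) = 1`, the fixed field of σ is
`𝔽_p`, and then the kernel of a nonzero σ-linearized polynomial of σ-degree `n` has dimension at
most `n`: a nonzero root `x₀` factors it as `L' ∘ (σ - 1) ∘ (x₀⁻¹ · ·)` with `L'` of σ-degree
`n - 1`, while `σ - 1` has a one-dimensional kernel.
-/

open Finset Module LinearMap

theorem LinearMap.finrank_ker_comp_le {K U V W : Type*} [Field K] [AddCommGroup U] [Module K U]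
    [AddCommGroup V] [Module K V] [AddCommGroup W] [Module K W]
    [FiniteDimensional K U] [FiniteDimensional K V] (f : U →ₗ[K] V) (g : V →ₗ[K] W) :
    finrank K (ker (g ∘ₗ f)) ≤ finrank K (ker g) + finrank K (ker f) := by
  set P := ker (g ∘ₗ f)
  have hrange : finrank K (range (f.domRestrict P)) ≤ finrank K (ker g) := by
    refine Submodule.finrank_mono ?_
    rintro _ ⟨y, rfl⟩
    exact y.2
  have hker : finrank K (ker (f.domRestrict P)) ≤ finrank K (ker f) := by
    refine LinearMap.finrank_le_finrank_of_injective
      (f := (P.subtype ∘ₗ (ker (f.domRestrict P)).subtype).codRestrict (ker f) fun y => y.2) ?_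
    intro y y' h
    exact Subtype.ext (Subtype.ext (congrArg Subtype.val h :))
  have := (f.domRestrict P).finrank_range_add_finrank_ker
  omega

theorem eq_zero_of_forall_sum_range_eq_zero {M : Type*} [AddCommGroup M] {t : ℕ → M} {N : ℕ}
    (ht : ∀ i ≤ N, ∑ j ∈ range (i + 1), t j = 0) {i : ℕ} (hi : i ≤ N) : t i = 0 := by
  cases i with
  | zero => simpa using ht 0 hi
  | succ i =>
    have h := ht (i + 1) hi
    rwa [sum_range_succ, ht i (by omega), zero_add] at h

theorem FiniteField.mem_range_algebraMap_of_frobenius_pow_apply_eq {K L : Type*} [Field K]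
    [Fintype K] [Field L] [Finite L] [Algebra K L] {n : ℕ} (hn : n.Coprime (finrank K L)) {x : L}
    (hx : (FiniteField.frobeniusAlgEquivOfAlgebraic K L ^ n) x = x) :
    x ∈ Set.range (algebraMap K L) := by
  set φ := FiniteField.frobeniusAlgEquivOfAlgebraic K L
  have hφ : φ ∈ MulAction.stabilizer Gal(L/K) x :=
    Subgroup.zpowers_le.mpr hx (mem_zpowers_pow_iff.mpr
      (by rwa [FiniteField.orderOf_frobeniusAlgEquivOfAlgebraic]))
  refine (IsGalois.mem_range_algebraMap_iff_fixed x).mpr fun f => ?_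
  obtain ⟨j, rfl⟩ := (FiniteField.bijective_frobeniusAlgEquivOfAlgebraic_pow K L).2 f
  exact Subgroup.pow_mem _ hφ j

theorem FiniteField.frobeniusAlgEquivOfAlgebraic_zmod_pow_apply (p : ℕ) [Fact p.Prime]
    {F : Type*} [Field F] [Algebra (ZMod p) F] [Algebra.IsAlgebraic (ZMod p) F] (n : ℕ) (x : F) :
    (FiniteField.frobeniusAlgEquivOfAlgebraic (ZMod p) F ^ n) x = x ^ p ^ n := by
  rw [AlgEquiv.coe_pow, FiniteField.coe_frobeniusAlgEquivOfAlgebraic_iterate, ZMod.card]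

section

variable {K F : Type*} [Field K] [Field F] [Algebra K F]

noncomputable def linearizedPoly (τ : F ≃ₐ[K] F) (a : ℕ → F) (n : ℕ) : F →ₗ[K] F :=
  ∑ i ∈ range n, a i • (τ ^ i).toLinearMap

theorem linearizedPoly_apply (τ : F ≃ₐ[K] F) (a : ℕ → F) (n : ℕ) (x : F) :
    linearizedPoly τ a n x = ∑ i ∈ range n, a i * (τ ^ i) x := by
  simp [linearizedPoly]

theorem linearizedPoly_comp_mulLeft (τ : F ≃ₐ[K] F) (a : ℕ → F) (n : ℕ) (c : F) :
    linearizedPoly τ a n ∘ₗ mulLeft K c = linearizedPoly τ (fun i => a i * (τ ^ i) c) n := by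
  ext x
  simp only [comp_apply, mulLeft_apply, linearizedPoly_apply, map_mul, mul_assoc]

theorem linearizedPoly_comp_sub_one (τ : F ≃ₐ[K] F) (t : ℕ → F) (n : ℕ)
    (ht : ∑ i ∈ range (n + 1), t i = 0) :
    linearizedPoly τ (fun i => -∑ j ∈ range (i + 1), t j) n ∘ₗ (τ.toLinearMap - 1)
      = linearizedPoly τ t (n + 1) := by
  ext x
  have h := sum_range_by_parts (fun i => (τ ^ i) x) t (n + 1)
  simp only [smul_eq_mul, add_tsub_cancel_right, ht, mul_zero, zero_sub] at h
  rw [comp_apply, linearizedPoly_apply, linearizedPoly_apply]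
  simp_rw [mul_comm (t _)]
  rw [h, ← sum_neg_distrib]
  refine sum_congr rfl fun i _ => ?_
  simp only [LinearMap.sub_apply, Module.End.one_apply, AlgEquiv.toLinearMap_apply, map_sub,
    pow_succ, AlgEquiv.mul_apply]
  ring

theorem finrank_ker_sub_one_le [FiniteDimensional K F] (τ : F ≃ₐ[K] F)
    (hτ : ∀ x, τ x = x → x ∈ Set.range (algebraMap K F)) :
    finrank K (ker (τ.toLinearMap - 1)) ≤ 1 :=
  calc finrank K (ker (τ.toLinearMap - 1))
      ≤ finrank K (range (Algebra.linearMap K F)) :=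
        Submodule.finrank_mono fun x hx => hτ x (by simpa [sub_eq_zero] using hx)
    _ ≤ finrank K K := finrank_range_le _
    _ = 1 := finrank_self K

theorem exists_linearizedPoly_eq_comp_of_apply_eq_zero (τ : F ≃ₐ[K] F) {n : ℕ} {a : ℕ → F}
    (ha : ∃ j ≤ n + 1, a j ≠ 0) {x₀ : F} (hx₀ : x₀ ≠ 0) (hL : linearizedPoly τ a (n + 2) x₀ = 0) :
    ∃ b : ℕ → F, (∃ j ≤ n, b j ≠ 0) ∧ linearizedPoly τ a (n + 2)
      = linearizedPoly τ b (n + 1) ∘ₗ ((τ.toLinearMap - 1) ∘ₗ mulLeft K x₀⁻¹) := by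
  set t : ℕ → F := fun i => a i * (τ ^ i) x₀
  have ht : ∑ i ∈ range (n + 2), t i = 0 := by rwa [linearizedPoly_apply] at hL
  refine ⟨fun i => -∑ j ∈ range (i + 1), t j, ?_, ?_⟩
  · by_contra! hb
    obtain ⟨j, hj, haj⟩ := ha
    have htj : t j = 0 := by
      refine eq_zero_of_forall_sum_range_eq_zero (N := n + 1) (fun i hi => ?_) hj
      rcases hi.lt_or_eq with hi | rfl
      · exact neg_eq_zero.mp (hb i (by omega))
      · exact ht
    exact haj ((mul_eq_zero.mp htj).resolve_right ((map_ne_zero _).mpr hx₀))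
  · rw [← comp_assoc, linearizedPoly_comp_sub_one τ t (n + 1) ht,
      ← linearizedPoly_comp_mulLeft, comp_assoc, ← mulLeft_mul, mul_inv_cancel₀ hx₀,
      mulLeft_one, comp_id]

theorem finrank_ker_linearizedPoly_le [FiniteDimensional K F] (τ : F ≃ₐ[K] F)
    (hτ : ∀ x, τ x = x → x ∈ Set.range (algebraMap K F)) (n : ℕ) (a : ℕ → F)
    (ha : ∃ j ≤ n, a j ≠ 0) :
    finrank K (ker (linearizedPoly τ a (n + 1))) ≤ n := by
  induction n generalizing a with
  | zero =>
    obtain ⟨j, hj, ha₀⟩ := ha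
    obtain rfl : j = 0 := by omega
    have : ker (linearizedPoly τ a 1) = ⊥ := by
      ext x
      simp [linearizedPoly_apply, ha₀]
    rw [this, finrank_bot]
  | succ n ih =>
    by_cases hbot : ker (linearizedPoly τ a (n + 2)) = ⊥
    · rw [hbot, finrank_bot]
      exact Nat.zero_le _
    obtain ⟨x₀, hx₀L, hx₀⟩ := Submodule.exists_mem_ne_zero_of_ne_bot hbot
    obtain ⟨b, hb, hL⟩ := exists_linearizedPoly_eq_comp_of_apply_eq_zero τ ha hx₀ hx₀L
    have hmul : ker (mulLeft K x₀⁻¹) = ⊥ :=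
      ker_eq_bot.mpr (mul_right_injective₀ (inv_ne_zero hx₀))
    have hcomp₁ := finrank_ker_comp_le ((τ.toLinearMap - 1) ∘ₗ mulLeft K x₀⁻¹)
      (linearizedPoly τ b (n + 1))
    have hcomp₂ := finrank_ker_comp_le (mulLeft K x₀⁻¹) (τ.toLinearMap - 1)
    rw [hmul, finrank_bot] at hcomp₂
    have := ih b hb
    have := finrank_ker_sub_one_le τ hτ
    rw [hL]
    omega

theorem Algebra.trace_mul_algEquiv_apply (σ : F ≃ₐ[K] F) (c z : F) :
    Algebra.trace K F (c * σ z) = Algebra.trace K F (σ.symm c * z) := by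
  rw [← Algebra.trace_eq_of_algEquiv σ (σ.symm c * z), map_mul σ, σ.apply_symm_apply]

theorem trace_polar_mul_algEquiv (τ : F ≃ₐ[K] F) (c x z : F) :
    Algebra.trace K F (c * (x + z) * τ (x + z)) - Algebra.trace K F (c * x * τ x)
      - Algebra.trace K F (c * z * τ z) = Algebra.trace K F ((c * τ x + τ.symm (c * x)) * z) := by
  calc _ = Algebra.trace K F (c * x * τ z) + Algebra.trace K F (c * τ x * z) := by
        rw [← map_sub, ← map_sub, ← map_add, map_add τ]
        ring_nf
    _ = _ := by rw [Algebra.trace_mul_algEquiv_apply, ← map_add, add_mul, add_comm]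

-- The paper's `Q_{u,v,w}` for `σ = (· ^ p ^ k)`, as `x ^ (p ^ k + 1) = x * σ x`.
noncomputable def trinomialForm (σ : F ≃ₐ[K] F) (u v w x : F) : K :=
  Algebra.trace K F (u * x * x + v * x * σ x + w * x * (σ ^ 2) x)

def trinomialPolar (σ : F ≃ₐ[K] F) (u v w x : F) : F :=
  2 * u * x + v * σ x + σ.symm (v * x) + w * (σ ^ 2) x + (σ ^ 2).symm (w * x)

def trinomialCoeff (σ : F ≃ₐ[K] F) (u v w : F) (i : ℕ) : F :=
  [w, σ v, (σ ^ 2) (2 * u), (σ ^ 2) v, (σ ^ 2) w].getD i 0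

theorem trinomialForm_add_sub (σ : F ≃ₐ[K] F) (u v w x z : F) :
    trinomialForm σ u v w (x + z) - trinomialForm σ u v w x - trinomialForm σ u v w z
      = Algebra.trace K F (trinomialPolar σ u v w x * z) := by
  have h₀ : Algebra.trace K F (u * (x + z) * (x + z)) - Algebra.trace K F (u * x * x)
      - Algebra.trace K F (u * z * z) = Algebra.trace K F ((u * x + u * x) * z) :=
    trace_polar_mul_algEquiv 1 u x z
  have h₁ := trace_polar_mul_algEquiv σ v x z
  have h₂ := trace_polar_mul_algEquiv (σ ^ 2) w x z
  have hG : trinomialPolar σ u v w x * z = (u * x + u * x) * z + (v * σ x + σ.symm (v * x)) * z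
      + (w * (σ ^ 2) x + (σ ^ 2).symm (w * x)) * z := by
    rw [trinomialPolar]
    ring
  rw [hG, map_add, map_add, ← h₀, ← h₁, ← h₂]
  simp only [trinomialForm, map_add]
  ring

theorem algEquiv_sq_trinomialPolar (σ : F ≃ₐ[K] F) (u v w x : F) :
    (σ ^ 2) (trinomialPolar σ u v w x) = linearizedPoly σ (trinomialCoeff σ u v w) 5 x := by
  simp only [trinomialPolar, trinomialCoeff, linearizedPoly_apply, sum_range_succ, sum_range_zero,
    List.getD_cons_zero, List.getD_cons_succ, map_add, map_mul, pow_succ, pow_zero, one_mul,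
    AlgEquiv.mul_apply, AlgEquiv.apply_symm_apply, AlgEquiv.one_apply]
  ring

theorem exists_trinomialCoeff_ne_zero (σ : F ≃ₐ[K] F) {u v w : F} (h2 : (2 : F) ≠ 0)
    (huvw : (u, v, w) ≠ (0, 0, 0)) : ∃ j ≤ 4, trinomialCoeff σ u v w j ≠ 0 := by
  rcases ne_or_eq w 0 with hw | rfl
  · exact ⟨0, by norm_num, by simpa [trinomialCoeff] using hw⟩
  rcases ne_or_eq v 0 with hv | rfl
  · exact ⟨1, by norm_num, by simpa [trinomialCoeff] using hv⟩
  have hu : u ≠ 0 := by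
    rintro rfl
    exact huvw rfl
  exact ⟨2, by norm_num, by simpa [trinomialCoeff] using mul_ne_zero h2 hu⟩

theorem forall_trinomialForm_add_sub_eq_zero_iff [FiniteDimensional K F] [Algebra.IsSeparable K F]
    (σ : F ≃ₐ[K] F) (u v w x : F) :
    (∀ z, trinomialForm σ u v w (x + z) - trinomialForm σ u v w x - trinomialForm σ u v w z = 0)
      ↔ x ∈ ker (linearizedPoly σ (trinomialCoeff σ u v w) 5) := by
  simp only [trinomialForm_add_sub, mem_ker, ← algEquiv_sq_trinomialPolar,
    map_eq_zero_iff _ (σ ^ 2).injective]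
  exact ⟨(traceForm_nondegenerate K F).1 _, fun h z => by rw [h, zero_mul, map_zero]⟩

theorem natCard_radical_trinomialForm_le [Finite F] (σ : F ≃ₐ[K] F)
    (hσ : ∀ x, σ x = x → x ∈ Set.range (algebraMap K F)) {u v w : F} (h2 : (2 : F) ≠ 0)
    (huvw : (u, v, w) ≠ (0, 0, 0)) :
    Nat.card {x : F // ∀ z,
      trinomialForm σ u v w (x + z) - trinomialForm σ u v w x - trinomialForm σ u v w z = 0}
      ≤ Nat.card K ^ 4 := by
  have : Finite K := .of_injective _ (algebraMap K F).injective
  rw [Nat.card_congr (Equiv.subtypeEquivRight (forall_trinomialForm_add_sub_eq_zero_iff σ u v w)),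
    Module.natCard_eq_pow_finrank (K := K)]
  exact Nat.pow_le_pow_right Nat.card_pos
    (finrank_ker_linearizedPoly_le σ hσ 4 _ (exists_trinomialCoeff_ne_zero σ h2 huvw))

end

theorem stmt_2_general (p m k : ℕ) [Fact p.Prime] (hp : Odd p) (hgcd : Nat.gcd m k = 1)
    (F : Type) [Field F] [Fintype F] [Algebra (ZMod p) F]
    (hF : Fintype.card F = p ^ m)
    (u v w : F) (huvw : (u, v, w) ≠ (0, 0, 0)) :
    Nat.card {x : F // ∀ z : F,
      Algebra.trace (ZMod p) F
          (u * (x + z) ^ 2 + v * (x + z) ^ (p ^ k + 1) + w * (x + z) ^ (p ^ (2 * k) + 1))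
        - Algebra.trace (ZMod p) F
          (u * x ^ 2 + v * x ^ (p ^ k + 1) + w * x ^ (p ^ (2 * k) + 1))
        - Algebra.trace (ZMod p) F
          (u * z ^ 2 + v * z ^ (p ^ k + 1) + w * z ^ (p ^ (2 * k) + 1)) = 0}
      ≤ p ^ 4 := by
  set σ := FiniteField.frobeniusAlgEquivOfAlgebraic (ZMod p) F ^ k with hσ_def
  have hfinrank : finrank (ZMod p) F = m := by
    have h := Module.card_eq_pow_finrank (K := ZMod p) (V := F)
    rw [hF, ZMod.card] at h
    exact (Nat.pow_right_injective (Fact.out : p.Prime).two_le h).symm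
  have hσ : ∀ y, σ y = y → y ∈ Set.range (algebraMap (ZMod p) F) := fun y =>
    FiniteField.mem_range_algebraMap_of_frobenius_pow_apply_eq
      (by rw [hfinrank]; exact Nat.coprime_comm.mp hgcd)
  have h2 : (2 : F) ≠ 0 := by
    have : CharP F p := charP_of_injective_algebraMap (algebraMap (ZMod p) F).injective p
    exact Ring.two_ne_zero (by rw [ringChar.eq F p]; exact hp.ne_two_of_dvd_nat dvd_rfl)
  have hQ : ∀ y : F, Algebra.trace (ZMod p) F (u * y ^ 2 + v * y ^ (p ^ k + 1)
      + w * y ^ (p ^ (2 * k) + 1)) = trinomialForm σ u v w y := by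
    intro y
    rw [trinomialForm, hσ_def, ← pow_mul, FiniteField.frobeniusAlgEquivOfAlgebraic_zmod_pow_apply,
      FiniteField.frobeniusAlgEquivOfAlgebraic_zmod_pow_apply, mul_comm k 2]
    congr 1
    ring
  simp_rw [hQ]
  simpa only [Nat.card_zmod] using natCard_radical_trinomialForm_le σ hσ h2 huvw

/-- Lemma 2.3: For `(u,v,w) ≠ (0,0,0)` in `F³`, `F = 𝔽_{p^m}`, the quadratic
form `Q_{u,v,w}(x) = Tr(ux² + vx^{p^k+1} + wx^{p^{2k}+1})` has rank at least
`m - 4`, i.e. its radical `V` has cardinality at most `p⁴`. -/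
theorem stmt_2 (p m k : ℕ) [Fact p.Prime] (hp : Odd p) (hm5 : 5 ≤ m) (hm : Odd m)
    (hk : 0 < k) (hgcd : Nat.gcd m k = 1)
    (F : Type) [Field F] [Fintype F] [Algebra (ZMod p) F]
    (hF : Fintype.card F = p ^ m)
    (u v w : F) (huvw : (u, v, w) ≠ (0, 0, 0)) :
    Nat.card {x : F // ∀ z : F,
      Algebra.trace (ZMod p) F
          (u * (x + z) ^ 2 + v * (x + z) ^ (p ^ k + 1) + w * (x + z) ^ (p ^ (2 * k) + 1))
        - Algebra.trace (ZMod p) F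
          (u * x ^ 2 + v * x ^ (p ^ k + 1) + w * x ^ (p ^ (2 * k) + 1))
        - Algebra.trace (ZMod p) F
          (u * z ^ 2 + v * z ^ (p ^ k + 1) + w * z ^ (p ^ (2 * k) + 1)) = 0}
      ≤ p ^ 4 :=
  stmt_2_general p m k hp hgcd F hF u v w huvw
end

section
/- The number of solutions (x₁,x₂,y₁,y₂) ∈ F² × (𝔽_p \ {0})² of the system y₁x₁² + y₂x₂² = 0 and y₁x₁^{d₁} + y₂x₂^{d₁} = 0 is (p-1)²·p^m. -/
/-!
If `x₁ ≠ 0`, dividing both equations by the appropriate power of `x₁` shows that `u = x₂ / x₁`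
satisfies `y₁ + y₂ u² = 0 = y₁ + y₂ u^{p^k+1}`, hence `u^{p^k} = u`. Then `u` is a periodic point of
the Frobenius `t ↦ t^p` with periods `k` and `m`, hence with period `gcd m k = 1`, so `u ∈ 𝔽_p^*`
and `y₁ = -u² y₂`. The solutions are therefore the `(p-1)²` ones with `x₁ = x₂ = 0` and the
`(p-1)²(p^m-1)` ones parametrized by `(u, y₂, x₁) ∈ 𝔽_p^* × 𝔽_p^* × F^*`.
-/

open Polynomial Function

theorem FiniteField.pow_eq_self_of_pow_pow_eq_self {F : Type*} [Field F] [Fintype F]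
    {p m k : ℕ} (hF : Fintype.card F = p ^ m) (hgcd : m.gcd k = 1) {t : F}
    (ht : t ^ p ^ k = t) : t ^ p = t := by
  have hm : IsPeriodicPt (· ^ p) m t := by
    rw [IsPeriodicPt, IsFixedPt, pow_iterate, ← hF]
    exact FiniteField.pow_card t
  have hk : IsPeriodicPt (· ^ p) k t := by
    rwa [IsPeriodicPt, IsFixedPt, pow_iterate]
  simpa [IsPeriodicPt, IsFixedPt, hgcd] using hm.gcd hk

theorem ZMod.mem_range_algebraMap_of_pow_eq_self {p : ℕ} [hp : Fact p.Prime] {F : Type*}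
    [Field F] [Algebra (ZMod p) F] {t : F} (ht : t ^ p = t) :
    t ∈ (algebraMap (ZMod p) F).range :=
  (GaloisField.splits_zmod_X_pow_sub_X p).mem_range_of_isRoot
    (FiniteField.X_pow_card_sub_X_ne_zero _ hp.out.one_lt) (by simp [ht])

section Field

variable {K : Type*} [Field K]

theorem add_mul_div_pow_eq_zero_of_add_eq_zero {c₁ c₂ x₁ x₂ : K} {n : ℕ} (hx : x₁ ≠ 0)
    (h : c₁ * x₁ ^ n + c₂ * x₂ ^ n = 0) : c₁ + c₂ * (x₂ / x₁) ^ n = 0 := by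
  have hxn := pow_ne_zero n hx
  have : c₁ + c₂ * (x₂ / x₁) ^ n = (c₁ * x₁ ^ n + c₂ * x₂ ^ n) / x₁ ^ n := by
    rw [eq_div_iff hxn, add_mul, div_pow, mul_assoc, div_mul_cancel₀ _ hxn]
  rw [this, h, zero_div]

theorem pow_eq_self_of_add_mul_pow_eq_zero {c₁ c₂ u : K} {q : ℕ} (hc : c₁ ≠ 0)
    (h₂ : c₁ + c₂ * u ^ 2 = 0) (hq : c₁ + c₂ * u ^ (q + 1) = 0) : u ^ q = u := by
  have hc₂u : c₂ * u ≠ 0 := fun h => hc (by linear_combination h₂ - u * h)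
  exact mul_left_cancel₀ hc₂u (by linear_combination hq - h₂)

end Field

def diagonalSolutions (p k : ℕ) (F : Type*) [Field F] [Algebra (ZMod p) F] :
    Set ((Fin 2 → F) × (Fin 2 → ZMod p)) :=
  {s | (∀ i, s.2 i ≠ 0) ∧
    ∑ i, algebraMap (ZMod p) F (s.2 i) * s.1 i ^ 2 = 0 ∧
    ∑ i, algebraMap (ZMod p) F (s.2 i) * s.1 i ^ (p ^ k + 1) = 0}

def diagonalParam {p : ℕ} {F : Type*} [Field F] [Algebra (ZMod p) F] :
    ((ZMod p)ˣ × (ZMod p)ˣ) ⊕ ((ZMod p)ˣ × (ZMod p)ˣ × Fˣ) → (Fin 2 → F) × (Fin 2 → ZMod p)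
  | .inl (y₁, y₂) => (0, ![y₁, y₂])
  | .inr (a, y, x) => (![x, algebraMap (ZMod p) F a * x], ![-(a ^ 2 * y), y])

section DiagonalSystem

variable {p : ℕ} [Fact p.Prime] {F : Type*} [Field F] [Algebra (ZMod p) F]

theorem diagonalParam_injective : Injective (diagonalParam (p := p) (F := F)) := by
  rintro (⟨y₁, y₂⟩ | ⟨a, y, x⟩) (⟨y₁', y₂'⟩ | ⟨a', y', x'⟩) h <;>
    simp only [diagonalParam, Prod.mk.injEq, funext_iff, Fin.forall_fin_two] at h
  · simp_all [Units.ext_iff]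
  · exact (x'.ne_zero h.1.1.symm).elim
  · exact (x.ne_zero h.1.1).elim
  · obtain ⟨⟨hx, hax⟩, -, hy⟩ := h
    rw [← Units.ext hx] at hax
    have ha : a = a' :=
      Units.ext ((algebraMap (ZMod p) F).injective (mul_right_cancel₀ x.ne_zero hax))
    rw [Units.ext hx, ha, Units.ext hy]

theorem diagonalParam_mem_diagonalSolutions (k : ℕ)
    (v : ((ZMod p)ˣ × (ZMod p)ˣ) ⊕ ((ZMod p)ˣ × (ZMod p)ˣ × Fˣ)) :
    diagonalParam v ∈ diagonalSolutions p k F := by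
  rcases v with ⟨y₁, y₂⟩ | ⟨a, y, x⟩
  · simp [diagonalParam, diagonalSolutions]
  · have hd : (algebraMap (ZMod p) F a) ^ p ^ k = algebraMap (ZMod p) F a := by
      rw [← map_pow, ZMod.pow_card_pow]
    simp only [diagonalSolutions, diagonalParam, Set.mem_ofPred_eq, Fin.forall_fin_two,
      Fin.sum_univ_two, Matrix.cons_val_zero, Matrix.cons_val_one, Matrix.cons_val_fin_one,
      map_neg, map_mul, map_pow, mul_pow]
    refine ⟨by simp, by ring, ?_⟩
    rw [pow_succ (algebraMap (ZMod p) F a) (p ^ k), hd]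
    ring

theorem exists_diagonalParam_eq [Fintype F] {m k : ℕ} (hF : Fintype.card F = p ^ m)
    (hgcd : m.gcd k = 1) {s : (Fin 2 → F) × (Fin 2 → ZMod p)}
    (hs : s ∈ diagonalSolutions p k F) : ∃ v, diagonalParam v = s := by
  obtain ⟨⟨x, y⟩, hy, h₂, hq⟩ := s, hs
  set A := algebraMap (ZMod p) F
  simp only [Fin.sum_univ_two] at h₂ hq
  have hA : ∀ i, A (y i) ≠ 0 := fun i => (map_ne_zero A).2 (hy i)
  by_cases hx : x 0 = 0
  · have hx1 : x 1 = 0 := by simpa [hx, hA 1] using h₂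
    refine ⟨.inl (Units.mk0 _ (hy 0), Units.mk0 _ (hy 1)), ?_⟩
    ext i <;> fin_cases i <;> simp [diagonalParam, hx, hx1]
  · set u := x 1 / x 0
    have e₂ := add_mul_div_pow_eq_zero_of_add_eq_zero hx h₂
    have eq := add_mul_div_pow_eq_zero_of_add_eq_zero hx hq
    have hu : u ^ p = u := FiniteField.pow_eq_self_of_pow_pow_eq_self hF hgcd
      (pow_eq_self_of_add_mul_pow_eq_zero (hA 0) e₂ eq)
    obtain ⟨a, ha⟩ := ZMod.mem_range_algebraMap_of_pow_eq_self hu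
    have hy0 : y 0 = -(a ^ 2 * y 1) := A.injective (by
      rw [map_neg, map_mul, map_pow, ha]
      linear_combination e₂)
    have ha0 : a ≠ 0 := by
      rintro rfl
      exact hy 0 (by simpa using hy0)
    refine ⟨.inr (Units.mk0 a ha0, Units.mk0 _ (hy 1), Units.mk0 _ hx), ?_⟩
    ext i <;> fin_cases i <;> simp [diagonalParam, ha, hy0, u, hx]

theorem range_diagonalParam [Fintype F] {m k : ℕ} (hF : Fintype.card F = p ^ m)
    (hgcd : m.gcd k = 1) : Set.range diagonalParam = diagonalSolutions p k F :=
  Set.eq_of_subset_of_subset (Set.range_subset_iff.2 (diagonalParam_mem_diagonalSolutions k))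
    fun _ hs => exists_diagonalParam_eq hF hgcd hs

end DiagonalSystem

theorem stmt_3_general (p m k : ℕ) [Fact p.Prime] (hgcd : Nat.gcd m k = 1)
    (F : Type) [Field F] [Fintype F] [Algebra (ZMod p) F]
    (hF : Fintype.card F = p ^ m) :
    Nat.card {s : (Fin 2 → F) × (Fin 2 → ZMod p) //
      (∀ i, s.2 i ≠ 0) ∧
      ∑ i, algebraMap (ZMod p) F (s.2 i) * s.1 i ^ 2 = 0 ∧
      ∑ i, algebraMap (ZMod p) F (s.2 i) * s.1 i ^ (p ^ k + 1) = 0} =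
    (p - 1) ^ 2 * p ^ m := by
  change Nat.card (diagonalSolutions p k F) = _
  rw [← range_diagonalParam hF hgcd,
    ← Nat.card_congr (Equiv.ofInjective _ diagonalParam_injective), Nat.card_sum,
    Nat.card_prod, Nat.card_prod, Nat.card_prod, Nat.card_units, Nat.card_units, Nat.card_zmod,
    Nat.card_eq_fintype_card (α := F), hF]
  zify [Nat.one_le_pow _ _ (Fact.out : p.Prime).pos, (Fact.out : p.Prime).one_le]
  ring

/-- Lemma 3.2: the number of solutions `(x₁,x₂,y₁,y₂) ∈ F² × (𝔽_p*)²` of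
`y₁x₁² + y₂x₂² = 0` and `y₁x₁^{d₁} + y₂x₂^{d₁} = 0`, with `d₁ = p^k + 1`,
is `(p-1)²·p^m`. -/
theorem stmt_3 (p m k : ℕ) [Fact p.Prime] (hp : Odd p) (hm5 : 5 ≤ m) (hm : Odd m)
    (hk : 0 < k) (hgcd : Nat.gcd m k = 1)
    (F : Type) [Field F] [Fintype F] [Algebra (ZMod p) F]
    (hF : Fintype.card F = p ^ m) :
    Nat.card {s : (Fin 2 → F) × (Fin 2 → ZMod p) //
      (∀ i, s.2 i ≠ 0) ∧
      ∑ i, algebraMap (ZMod p) F (s.2 i) * s.1 i ^ 2 = 0 ∧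
      ∑ i, algebraMap (ZMod p) F (s.2 i) * s.1 i ^ (p ^ k + 1) = 0} =
    (p - 1) ^ 2 * p ^ m :=
  stmt_3_general p m k hgcd F hF
end

section
/- The number of solutions (x₁,x₂,y₁,y₂) ∈ F² × (𝔽_p \ {0})² of the system y₁x₁² + y₂x₂² = 0, y₁x₁^{d₁} + y₂x₂^{d₁} = 0 and y₁x₁^{d₂} + y₂x₂^{d₂} = 0 is (p-1)²·p^m; in particular it equals the number of solutions of the system consisting of only the first two equations. -/
/-! If `x₂ = 0`, the first equation forces `x₁ = 0` and every equation holds. Otherwise the ratio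
`t = x₁ / x₂` satisfies `y₁ t² = -y₂ = y₁ t^(p^k+1)`, so `t^(p^k) = t`; together with
`t^(p^m) = t` and `gcd(m, k) = 1` this gives `t^p = t`, i.e. `t ∈ 𝔽_p`. So the solutions of the
first two equations are exactly `x = (w z, z)`, `y = (u, -u w²)` with `u, w ∈ 𝔽_p^×`, `z ∈ F^×`,
together with `x = 0`, `y ∈ (𝔽_p^×)²`. Each of them solves the equation of exponent `p^j + 1` for
every `j` (as `w^(p^j) = w`), in particular the third one, and there are
`(p - 1)² (p^m - 1) + (p - 1)²` of them. -/

open Polynomial in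
theorem mem_range_of_pow_eq_self {p : ℕ} [Fact p.Prime] {R : Type*} [CommRing R] [IsDomain R]
    (i : ZMod p →+* R) {t : R} (ht : t ^ p = t) : t ∈ i.range :=
  (GaloisField.splits_zmod_X_pow_sub_X p).mem_range_of_isRoot
    (FiniteField.X_pow_card_sub_X_ne_zero _ (Fact.out : p.Prime).one_lt) (by simp [ht])

theorem pow_pow_gcd_eq_self {M : Type*} [Monoid M] {t : M} {p m k : ℕ}
    (hm : t ^ p ^ m = t) (hk : t ^ p ^ k = t) : t ^ p ^ m.gcd k = t := by
  have hper : ∀ n, Function.IsPeriodicPt (· ^ p) n t ↔ t ^ p ^ n = t := fun n => by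
    simp only [Function.IsPeriodicPt, Function.IsFixedPt, pow_iterate]
  exact (hper _).1 (((hper m).2 hm).gcd ((hper k).2 hk))

theorem div_pow_eq_self_of_add_eq_zero {K : Type*} [Field K] {a b x₁ x₂ : K} {n : ℕ}
    (hb : b ≠ 0) (hx₂ : x₂ ≠ 0) (h₁ : a * x₁ ^ 2 + b * x₂ ^ 2 = 0)
    (h₂ : a * x₁ ^ (n + 1) + b * x₂ ^ (n + 1) = 0) : (x₁ / x₂) ^ n = x₁ / x₂ := by
  set t := x₁ / x₂
  have hx₁ : x₁ = t * x₂ := (div_mul_cancel₀ _ hx₂).symm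
  rw [hx₁] at h₁ h₂
  have e₁ : a * t ^ 2 + b = 0 := (mul_eq_zero.1 (by linear_combination h₁ :
    x₂ ^ 2 * (a * t ^ 2 + b) = 0)).resolve_left (pow_ne_zero 2 hx₂)
  have e₂ : a * t ^ (n + 1) + b = 0 := (mul_eq_zero.1 (by linear_combination h₂ :
    x₂ ^ (n + 1) * (a * t ^ (n + 1) + b) = 0)).resolve_left (pow_ne_zero _ hx₂)
  have ha : a ≠ 0 := by rintro rfl; exact hb (by simpa using e₁)
  have ht : t ≠ 0 := fun h => hb (by simpa [h] using e₁)
  refine mul_right_cancel₀ ht (mul_left_cancel₀ ha ?_)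
  linear_combination e₂ - e₁

section DiagonalSystem

variable (p : ℕ) [Fact p.Prime] (F : Type*) [Field F] [Algebra (ZMod p) F]

def DiagonalEq (e : ℕ) (s : (Fin 2 → F) × (Fin 2 → ZMod p)) : Prop :=
  ∑ i, algebraMap (ZMod p) F (s.2 i) * s.1 i ^ e = 0

def solutionParam : (ZMod p)ˣ × (ZMod p)ˣ × Option Fˣ → (Fin 2 → F) × (Fin 2 → ZMod p)
  | (u, w, none) => (![0, 0], ![u, w])
  | (u, w, some z) => (![algebraMap (ZMod p) F w * z, z], ![u, -(u * w ^ 2)])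

variable {p F}

theorem solutionParam_ne_zero (a : (ZMod p)ˣ × (ZMod p)ˣ × Option Fˣ) (i : Fin 2) :
    (solutionParam p F a).2 i ≠ 0 := by
  obtain ⟨u, w, _ | z⟩ := a <;> fin_cases i <;> simp [solutionParam]

theorem diagonalEq_solutionParam (j : ℕ) (a : (ZMod p)ˣ × (ZMod p)ˣ × Option Fˣ) :
    DiagonalEq p F (p ^ j + 1) (solutionParam p F a) := by
  obtain ⟨u, w, _ | z⟩ := a
  · simp [DiagonalEq, solutionParam]
  · have hw : (w : ZMod p) ^ (p ^ j + 1) = w ^ 2 := by rw [pow_succ, ZMod.pow_card_pow, sq]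
    simp only [DiagonalEq, solutionParam, Fin.sum_univ_two, Matrix.cons_val_zero,
      Matrix.cons_val_one, map_neg, map_mul, mul_pow, ← map_pow, hw]
    ring

theorem solutionParam_injective : Function.Injective (solutionParam p F) := by
  rintro ⟨u, w, _ | z⟩ ⟨u', w', _ | z'⟩ h <;>
    simp [solutionParam, funext_iff, Fin.forall_fin_two, Units.ext_iff] at h ⊢
  case none.none => exact h
  case some.some =>
    obtain ⟨⟨hwz, hz⟩, hu, -⟩ := h
    rw [hz] at hwz
    exact ⟨hu, (algebraMap (ZMod p) F).injective (mul_right_cancel₀ z'.ne_zero hwz), hz⟩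

theorem exists_eq_algebraMap_mul [Fintype F] {m k : ℕ} (hF : Fintype.card F = p ^ m)
    (hgcd : m.gcd k = 1) {a b x₀ x₁ : F} (hb : b ≠ 0) (hx₁ : x₁ ≠ 0)
    (h₂ : a * x₀ ^ 2 + b * x₁ ^ 2 = 0) (hk : a * x₀ ^ (p ^ k + 1) + b * x₁ ^ (p ^ k + 1) = 0) :
    ∃ w : ZMod p, x₀ = algebraMap (ZMod p) F w * x₁ := by
  have hp : (x₀ / x₁) ^ p ^ m.gcd k = x₀ / x₁ :=
    pow_pow_gcd_eq_self (hF ▸ FiniteField.pow_card _) (div_pow_eq_self_of_add_eq_zero hb hx₁ h₂ hk)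
  rw [hgcd, pow_one] at hp
  obtain ⟨w, hw⟩ := mem_range_of_pow_eq_self (algebraMap (ZMod p) F) hp
  exact ⟨w, by rw [hw, div_mul_cancel₀ _ hx₁]⟩

theorem mem_range_solutionParam [Fintype F] {m k : ℕ} (hF : Fintype.card F = p ^ m)
    (hgcd : m.gcd k = 1) {s : (Fin 2 → F) × (Fin 2 → ZMod p)} (hy : ∀ i, s.2 i ≠ 0)
    (h₂ : DiagonalEq p F 2 s) (hk : DiagonalEq p F (p ^ k + 1) s) :
    s ∈ Set.range (solutionParam p F) := by
  obtain ⟨x, y⟩ := s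
  simp only [DiagonalEq, Fin.sum_univ_two] at h₂ hk
  have hy' : ∀ i, algebraMap (ZMod p) F (y i) ≠ 0 := fun i => (map_ne_zero _).2 (hy i)
  by_cases hx₁ : x 1 = 0
  · have hx₀ : x 0 = 0 := by simpa [hx₁, hy' 0] using h₂
    refine ⟨(Units.mk0 (y 0) (hy 0), Units.mk0 (y 1) (hy 1), none), ?_⟩
    ext i <;> fin_cases i <;> simp [solutionParam, hx₀, hx₁]
  · obtain ⟨w, hxw⟩ := exists_eq_algebraMap_mul hF hgcd (hy' 1) hx₁ h₂ hk
    have hx₀ : x 0 ≠ 0 := fun h => by simp [h, hx₁, hy' 1] at h₂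
    have hw₀ : w ≠ 0 := by rintro rfl; simp [hxw] at hx₀
    have hyw : y 1 = -(y 0 * w ^ 2) := by
      rw [hxw] at h₂
      apply (algebraMap (ZMod p) F).injective
      simp only [map_neg, map_mul, map_pow]
      linear_combination (mul_eq_zero.1 (by linear_combination h₂ : x 1 ^ 2 *
        (algebraMap (ZMod p) F (y 0) * algebraMap (ZMod p) F w ^ 2 + algebraMap (ZMod p) F (y 1))
          = 0)).resolve_left (pow_ne_zero 2 hx₁)
    refine ⟨(Units.mk0 (y 0) (hy 0), Units.mk0 w hw₀, some (Units.mk0 (x 1) hx₁)), ?_⟩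
    ext i <;> fin_cases i <;> simp [solutionParam, hxw, hyw]

theorem mem_range_solutionParam_iff [Fintype F] {m k : ℕ} (hF : Fintype.card F = p ^ m)
    (hgcd : m.gcd k = 1) (s : (Fin 2 → F) × (Fin 2 → ZMod p)) :
    s ∈ Set.range (solutionParam p F) ↔
      (∀ i, s.2 i ≠ 0) ∧ DiagonalEq p F 2 s ∧ DiagonalEq p F (p ^ k + 1) s := by
  refine ⟨?_, fun ⟨hy, h₂, hk⟩ => mem_range_solutionParam hF hgcd hy h₂ hk⟩
  rintro ⟨a, rfl⟩
  exact ⟨solutionParam_ne_zero a, diagonalEq_solutionParam 0 a, diagonalEq_solutionParam k a⟩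

theorem card_range_solutionParam [Fintype F] {m : ℕ} (hF : Fintype.card F = p ^ m) :
    Nat.card (Set.range (solutionParam p F)) = (p - 1) ^ 2 * p ^ m := by
  classical
  have hpm : p ^ m - 1 + 1 = p ^ m :=
    Nat.sub_add_cancel (Nat.one_le_pow _ _ (Fact.out : p.Prime).pos)
  rw [Nat.card_range_of_injective solutionParam_injective, Nat.card_eq_fintype_card,
    Fintype.card_prod, Fintype.card_prod, Fintype.card_option, ZMod.card_units, Fintype.card_units,
    hF, hpm, sq, mul_assoc]

end DiagonalSystem

theorem stmt_4_general (p m k : ℕ) [Fact p.Prime] (hgcd : Nat.gcd m k = 1)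
    (F : Type) [Field F] [Fintype F] [Algebra (ZMod p) F]
    (hF : Fintype.card F = p ^ m) :
    Nat.card {s : (Fin 2 → F) × (Fin 2 → ZMod p) //
      (∀ i, s.2 i ≠ 0) ∧
      ∑ i, algebraMap (ZMod p) F (s.2 i) * s.1 i ^ 2 = 0 ∧
      ∑ i, algebraMap (ZMod p) F (s.2 i) * s.1 i ^ (p ^ k + 1) = 0 ∧
      ∑ i, algebraMap (ZMod p) F (s.2 i) * s.1 i ^ (p ^ (2 * k) + 1) = 0} =
    (p - 1) ^ 2 * p ^ m ∧
    Nat.card {s : (Fin 2 → F) × (Fin 2 → ZMod p) //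
      (∀ i, s.2 i ≠ 0) ∧
      ∑ i, algebraMap (ZMod p) F (s.2 i) * s.1 i ^ 2 = 0 ∧
      ∑ i, algebraMap (ZMod p) F (s.2 i) * s.1 i ^ (p ^ k + 1) = 0 ∧
      ∑ i, algebraMap (ZMod p) F (s.2 i) * s.1 i ^ (p ^ (2 * k) + 1) = 0} =
    Nat.card {s : (Fin 2 → F) × (Fin 2 → ZMod p) //
      (∀ i, s.2 i ≠ 0) ∧
      ∑ i, algebraMap (ZMod p) F (s.2 i) * s.1 i ^ 2 = 0 ∧
      ∑ i, algebraMap (ZMod p) F (s.2 i) * s.1 i ^ (p ^ k + 1) = 0} := by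
  have two_eqs : ∀ s, ((∀ i, s.2 i ≠ 0) ∧ DiagonalEq p F 2 s ∧ DiagonalEq p F (p ^ k + 1) s) ↔
      s ∈ Set.range (solutionParam p F) := fun s => (mem_range_solutionParam_iff hF hgcd s).symm
  have three_eqs : ∀ s, ((∀ i, s.2 i ≠ 0) ∧ DiagonalEq p F 2 s ∧ DiagonalEq p F (p ^ k + 1) s ∧
      DiagonalEq p F (p ^ (2 * k) + 1) s) ↔ s ∈ Set.range (solutionParam p F) := by
    refine fun s => ⟨fun ⟨hy, h₂, hk, _⟩ => (two_eqs s).1 ⟨hy, h₂, hk⟩, fun hs => ?_⟩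
    obtain ⟨hy, h₂, hk⟩ := (two_eqs s).2 hs
    obtain ⟨a, rfl⟩ := hs
    exact ⟨hy, h₂, hk, diagonalEq_solutionParam (2 * k) a⟩
  have h₃ := (Nat.card_congr (Equiv.subtypeEquivRight three_eqs)).trans
    (card_range_solutionParam hF)
  have h₂ := (Nat.card_congr (Equiv.subtypeEquivRight two_eqs)).trans
    (card_range_solutionParam hF)
  exact ⟨h₃, h₃.trans h₂.symm⟩

/-- Remark after Lemma 3.2: the number of solutions `(x₁,x₂,y₁,y₂) ∈ F² × (𝔽_p*)²`
of the three equations `y₁x₁² + y₂x₂² = 0`, `y₁x₁^{d₁} + y₂x₂^{d₁} = 0` and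
`y₁x₁^{d₂} + y₂x₂^{d₂} = 0` (`d₁ = p^k+1`, `d₂ = p^{2k}+1`) is `(p-1)²·p^m`;
in particular it equals the number of solutions of the first two equations only. -/
theorem stmt_4 (p m k : ℕ) [Fact p.Prime] (hp : Odd p) (hm5 : 5 ≤ m) (hm : Odd m)
    (hk : 0 < k) (hgcd : Nat.gcd m k = 1)
    (F : Type) [Field F] [Fintype F] [Algebra (ZMod p) F]
    (hF : Fintype.card F = p ^ m) :
    Nat.card {s : (Fin 2 → F) × (Fin 2 → ZMod p) //
      (∀ i, s.2 i ≠ 0) ∧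
      ∑ i, algebraMap (ZMod p) F (s.2 i) * s.1 i ^ 2 = 0 ∧
      ∑ i, algebraMap (ZMod p) F (s.2 i) * s.1 i ^ (p ^ k + 1) = 0 ∧
      ∑ i, algebraMap (ZMod p) F (s.2 i) * s.1 i ^ (p ^ (2 * k) + 1) = 0} =
    (p - 1) ^ 2 * p ^ m ∧
    Nat.card {s : (Fin 2 → F) × (Fin 2 → ZMod p) //
      (∀ i, s.2 i ≠ 0) ∧
      ∑ i, algebraMap (ZMod p) F (s.2 i) * s.1 i ^ 2 = 0 ∧
      ∑ i, algebraMap (ZMod p) F (s.2 i) * s.1 i ^ (p ^ k + 1) = 0 ∧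
      ∑ i, algebraMap (ZMod p) F (s.2 i) * s.1 i ^ (p ^ (2 * k) + 1) = 0} =
    Nat.card {s : (Fin 2 → F) × (Fin 2 → ZMod p) //
      (∀ i, s.2 i ≠ 0) ∧
      ∑ i, algebraMap (ZMod p) F (s.2 i) * s.1 i ^ 2 = 0 ∧
      ∑ i, algebraMap (ZMod p) F (s.2 i) * s.1 i ^ (p ^ k + 1) = 0} :=
  stmt_4_general p m k hgcd F hF
end

section
/- The number of solutions (x₁,x₂,x₃,y₁,y₂,y₃) ∈ F³ × (𝔽_p \ {0})³ of the system y₁x₁² + y₂x₂² + y₃x₃² = 0 and y₁x₁^{d₁} + y₂x₂^{d₁} + y₃x₃^{d₁} = 0 is (p-1)³·(p^{m+1} + p^m − p). -/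
/-!
Fix `y` and let `B(u, v) = ∑ yᵢ uᵢ vᵢ`, a nondegenerate symmetric form on `F³`. Let `σ` be the
`p^k`-th power map. If `x` solves both equations, then `x` and `σ x` span a totally isotropic
subspace: `B(x, x) = 0`, `B(σ x, σ x) = σ (B(x, x)) = 0`, and `B(x, σ x) = 0` is the second
equation. In dimension `3` such a subspace is at most a line, so `σ x = λ x`, and every ratio
`xᵢ / xⱼ` is fixed by `σ`. It is also fixed by the `p^m`-th power map, hence by the
`p^gcd(m,k) = p`-th power map, i.e. it lies in `𝔽_p`. The solutions are therefore exactly the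
`F`-multiples of the `𝔽_p`-points of the conic `∑ yᵢ zᵢ² = 0`, which has `p²` points by a quadratic
character sum. Each nonzero solution arises from exactly `p - 1` pairs (scalar, conic point), so
there are `(p^m - 1)(p² - 1)/(p - 1)` nonzero solutions.
-/

open Finset Function Module
open LinearMap (BilinForm)

section QuadraticCharSum

variable {K : Type*} [Field K] [Fintype K] [DecidableEq K]

local notation "χ" => quadraticChar K

lemma sum_quadraticChar_mul_add (hK : ringChar K ≠ 2) {A : K} (hA : A ≠ 0) (B : K) :
    ∑ s, χ (A * s + B) = 0 := by
  rw [← quadraticChar_sum_zero hK]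
  exact Fintype.sum_bijective (fun s => A * s + B)
    ((add_left_injective B).comp (mul_right_injective₀ hA)).bijective_of_finite _ _ fun _ => rfl

lemma sum_apply_sq (hK : ringChar K ≠ 2) (f : K → ℤ) :
    ∑ x, f (x ^ 2) = ∑ s, (χ s + 1) * f s := by
  rw [← sum_fiberwise univ (· ^ 2)]
  refine Fintype.sum_congr _ _ fun s => ?_
  rw [← quadraticChar_card_sqrts hK s, Set.toFinset_ofPred, sum_congr rfl fun x hx =>
    congrArg f (mem_filter.1 hx).2, sum_const, nsmul_eq_mul]

lemma sum_quadraticChar_mul_sq_add (hK : ringChar K ≠ 2) {B C : K} (hB : B ≠ 0) (hC : C ≠ 0) :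
    ∑ x, χ (B * x ^ 2 + C) = -χ B := by
  have h_inv : ∑ s, χ (C * s⁻¹ + B) = 0 := by
    rw [← sum_quadraticChar_mul_add hK hC B]
    exact Fintype.sum_bijective _ inv_involutive.bijective _ _ fun _ => rfl
  -- `χ s * χ (B * s + C) = χ (s ^ 2 * (C * s⁻¹ + B))` for `s ≠ 0`
  have h_split : ∑ s, χ (C * s⁻¹ + B) = χ B + ∑ s, χ s * χ (B * s + C) := by
    rw [Fintype.sum_eq_add_sum_compl 0, Fintype.sum_eq_add_sum_compl 0 (fun s => χ s * _)]
    simp only [inv_zero, mul_zero, zero_add, quadraticChar_zero, zero_mul, add_right_inj]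
    refine sum_congr rfl fun s hs => ?_
    have hs : s ≠ 0 := by simpa using hs
    rw [← map_mul, ← one_mul (χ (C * s⁻¹ + B)), ← quadraticChar_sq_one' hs, ← map_mul]
    congr 1
    field_simp
    ring
  calc ∑ x, χ (B * x ^ 2 + C) = ∑ s, (χ s + 1) * χ (B * s + C) :=
        sum_apply_sq hK fun s => χ (B * s + C)
    _ = ∑ s, χ s * χ (B * s + C) + ∑ s, χ (B * s + C) := by
        simp only [add_mul, one_mul, sum_add_distrib]
    _ = -χ B := by rw [sum_quadraticChar_mul_add hK hB]; linarith

lemma sum_quadraticChar_mul_sq (B : K) :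
    ∑ x, χ (B * x ^ 2) = ((Fintype.card K : ℤ) - 1) * χ B := by
  rw [Fintype.sum_eq_add_sum_compl 0, sum_congr rfl fun x hx => by
    rw [map_mul, quadraticChar_sq_one' (by simpa using hx), mul_one]]
  simp [card_compl, Nat.cast_sub Fintype.card_pos]

lemma sum_sum_quadraticChar_mul_sq_add_mul_sq (hK : ringChar K ≠ 2) {A B : K} (hA : A ≠ 0)
    (hB : B ≠ 0) : ∑ x, ∑ y, χ (A * x ^ 2 + B * y ^ 2) = 0 := by
  have h_ne : ∀ x ∈ ({0}ᶜ : Finset K), ∑ y, χ (A * x ^ 2 + B * y ^ 2) = -χ B := fun x hx => by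
    simp_rw [add_comm (A * x ^ 2)]
    exact sum_quadraticChar_mul_sq_add hK hB (mul_ne_zero hA (pow_ne_zero 2 (by simpa using hx)))
  rw [Fintype.sum_eq_add_sum_compl 0, sum_congr rfl h_ne, sum_const,
    card_compl, card_singleton]
  simp only [ne_eq, OfNat.ofNat_ne_zero, not_false_eq_true, zero_pow, mul_zero, zero_add,
    sum_quadraticChar_mul_sq, smul_neg, nsmul_eq_mul, Nat.cast_sub Fintype.card_pos, Nat.cast_one]
  ring

lemma card_mul_sq_eq (hK : ringChar K ≠ 2) {a : K} (ha : a ≠ 0) (w : K) :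
    (#{x | a * x ^ 2 = w} : ℤ) = χ (w / a) + 1 := by
  rw [← quadraticChar_card_sqrts hK, Set.toFinset_ofPred]
  simp_rw [eq_div_iff ha, mul_comm _ a]

lemma card_sum_mul_sq_eq_zero (hK : ringChar K ≠ 2) {a : Fin 3 → K} (ha : ∀ i, a i ≠ 0) :
    #{z : Fin 3 → K | ∑ i, a i * z i ^ 2 = 0} = Fintype.card K ^ 2 := by
  have h_fiber : ∀ w : Fin 2 → K, (#{c | ∑ i, a i * (Fin.cons c w : Fin 3 → K) i ^ 2 = 0} : ℤ) =
      χ (-(a 1 / a 0) * w 0 ^ 2 + -(a 2 / a 0) * w 1 ^ 2) + 1 := fun w => by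
    simp only [Fin.sum_univ_succ (n := 2), Fin.cons_zero, Fin.cons_succ, Fin.sum_univ_two,
      Fin.succ_zero_eq_one, Fin.succ_one_eq_two, ← eq_neg_iff_add_eq_zero]
    rw [card_mul_sq_eq hK (ha 0)]
    congr 2
    field_simp
    ring
  zify
  rw [natCast_card_filter,
    ← Fintype.sum_equiv (Fin.consEquiv fun _ => K) (fun cw => _) _ fun _ => rfl,
    Fintype.sum_prod_type_right]
  simp_rw [Fin.consEquiv_apply, ← natCast_card_filter, h_fiber]
  rw [← Fintype.sum_equiv (piFinTwoEquiv fun _ => K).symm (fun xy => _) _ fun _ => rfl,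
    Fintype.sum_prod_type]
  simp only [piFinTwoEquiv_symm_apply, Fin.cons_zero, Fin.cons_one, sum_add_distrib,
    sum_sum_quadraticChar_mul_sq_add_mul_sq hK (neg_ne_zero.2 (div_ne_zero (ha 1) (ha 0)))
      (neg_ne_zero.2 (div_ne_zero (ha 2) (ha 0)))]
  simp [sq]

end QuadraticCharSum

section NonzeroIsotropicVectors

variable {K ι : Type*} [Field K] [Fintype K] [DecidableEq K] [Fintype ι] [DecidableEq ι]

def nonzeroIsotropicVectors (a : ι → K) : Finset (ι → K) :=
  ({z | ∑ i, a i * z i ^ 2 = 0} : Finset _).erase 0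

lemma mem_nonzeroIsotropicVectors {a z : ι → K} :
    z ∈ nonzeroIsotropicVectors a ↔ z ≠ 0 ∧ ∑ i, a i * z i ^ 2 = 0 := by
  simp [nonzeroIsotropicVectors]

lemma zero_notMem_nonzeroIsotropicVectors (a : ι → K) : 0 ∉ nonzeroIsotropicVectors a :=
  notMem_erase 0 _

lemma smul_mem_nonzeroIsotropicVectors {a z : ι → K} {α : K} (hα : α ≠ 0)
    (hz : z ∈ nonzeroIsotropicVectors a) : α • z ∈ nonzeroIsotropicVectors a := by
  rw [mem_nonzeroIsotropicVectors] at hz ⊢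
  refine ⟨smul_ne_zero hα hz.1, ?_⟩
  simp only [Pi.smul_apply, smul_eq_mul, mul_pow, mul_left_comm _ (α ^ 2), ← mul_sum, hz.2,
    mul_zero]

lemma card_nonzeroIsotropicVectors (hK : ringChar K ≠ 2) {a : Fin 3 → K} (ha : ∀ i, a i ≠ 0) :
    #(nonzeroIsotropicVectors a) = Fintype.card K ^ 2 - 1 := by
  rw [nonzeroIsotropicVectors, card_erase_of_mem (by simp), card_sum_mul_sq_eq_zero hK ha]

end NonzeroIsotropicVectors

namespace LinearMap.BilinForm

variable {K V : Type*} [Field K] [AddCommGroup V] [Module K V]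

lemma span_le_orthogonal_span {B : BilinForm K V} {S : Set V}
    (h : ∀ s ∈ S, ∀ t ∈ S, B s t = 0) :
    Submodule.span K S ≤ B.orthogonal (Submodule.span K S) :=
  Submodule.span_le.2 fun t ht _ hn =>
    (Submodule.span_le (p := LinearMap.ker (B.flip t)).2 (fun s hs => h s hs t ht) hn : _)

variable [FiniteDimensional K V]

lemma two_mul_finrank_le_of_le_orthogonal {B : BilinForm K V} (hB : B.Nondegenerate)
    {W : Submodule K V} (hW : W ≤ B.orthogonal W) : 2 * finrank K W ≤ finrank K V := by
  have h_mono := Submodule.finrank_mono hW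
  rw [finrank_orthogonal hB] at h_mono
  have := Submodule.finrank_le W
  omega

lemma exists_smul_eq_of_isotropic {B : BilinForm K V} (hB : B.Nondegenerate)
    (hV : finrank K V < 4) {u v : V} (hu : u ≠ 0) (huu : B u u = 0) (hvv : B v v = 0)
    (huv : B u v = 0) (hvu : B v u = 0) : ∃ c : K, c • u = v := by
  by_contra! h
  have h_ind : LinearIndependent K ![v, u] := linearIndependent_fin2.2 ⟨hu, h⟩
  have h_iso : Submodule.span K (Set.range ![v, u]) ≤
      B.orthogonal (Submodule.span K (Set.range ![v, u])) := by
    refine span_le_orthogonal_span ?_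
    simp [huu, hvv, huv, hvu]
  have := two_mul_finrank_le_of_le_orthogonal hB h_iso
  rw [finrank_span_eq_card h_ind, Fintype.card_fin] at this
  omega

end LinearMap.BilinForm

lemma exists_smul_eq_of_diagonal_isotropic {K ι : Type*} [Field K] [Fintype ι] [DecidableEq ι]
    (hι : Fintype.card ι < 4) {a : ι → K} (ha : ∀ i, a i ≠ 0) {u v : ι → K} (hu : u ≠ 0)
    (huu : ∑ i, a i * (u i * u i) = 0) (hvv : ∑ i, a i * (v i * v i) = 0)
    (huv : ∑ i, a i * (u i * v i) = 0) : ∃ c : K, c • u = v := by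
  have hB : ∀ x y, Matrix.toBilin' (Matrix.diagonal a) x y = ∑ i, a i * (x i * y i) := by
    intro x y
    simp only [Matrix.toBilin'_apply', dotProduct, Matrix.mulVec_diagonal]
    exact sum_congr rfl fun i _ => by ring
  refine LinearMap.BilinForm.exists_smul_eq_of_isotropic (B := Matrix.toBilin' (Matrix.diagonal a))
    ?_ (by simpa using hι) hu (by rwa [hB]) (by rwa [hB]) (by rwa [hB]) ?_
  · rw [LinearMap.BilinForm.nondegenerate_toBilin'_iff_det_ne_zero, Matrix.det_diagonal]
    exact prod_ne_zero_iff.2 fun i _ => ha i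
  · rw [hB, ← huv]
    exact sum_congr rfl fun i _ => by ring

lemma exists_algebraMap_eq_of_pow_pow_eq_self {p m k : ℕ} [Fact p.Prime] {F : Type*} [Field F]
    [Fintype F] [Algebra (ZMod p) F] (hF : Fintype.card F = p ^ m) (hmk : Nat.gcd m k = 1)
    {u : F} (hu : u ^ p ^ k = u) : ∃ z : ZMod p, algebraMap (ZMod p) F z = u := by
  have := charP_of_injective_algebraMap (algebraMap (ZMod p) F).injective p
  have hm : IsPeriodicPt (frobenius F p) m u := by
    rw [IsPeriodicPt, IsFixedPt, iterate_frobenius, ← hF, FiniteField.pow_card]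
  have hk : IsPeriodicPt (frobenius F p) k u := by
    rw [IsPeriodicPt, IsFixedPt, iterate_frobenius, hu]
  have h_fix := hm.gcd hk
  rw [hmk, IsPeriodicPt, IsFixedPt, iterate_one, frobenius_def] at h_fix
  exact RingHom.mem_fieldRange.1 <| bot_le (a := (algebraMap (ZMod p) F).fieldRange) <|
    (Subfield.mem_bot_iff_pow_eq_self F p).2 h_fix

section ScalarExtension

variable {K L ι : Type*} [Field K] [Field L] [Algebra K L]

def smulAlgebraMap (t : L × (ι → K)) : ι → L := fun i => t.1 * algebraMap K L (t.2 i)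

lemma exists_eq_smul_of_mul_algebraMap_eq {c c₀ : L} (hc : c ≠ 0) {z z₀ : ι → K} (hz₀ : z₀ ≠ 0)
    (h : ∀ i, c * algebraMap K L (z i) = c₀ * algebraMap K L (z₀ i)) :
    ∃ α : K, z = α • z₀ ∧ c₀ = c * algebraMap K L α := by
  obtain ⟨j, hj⟩ := Function.ne_iff.1 hz₀
  have hj' : algebraMap K L (z₀ j) ≠ 0 := (map_ne_zero _).2 hj
  have hc₀ : c₀ = c * algebraMap K L (z j / z₀ j) := by
    rw [map_div₀, ← mul_div_assoc, h j, mul_div_cancel_right₀ _ hj']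
  refine ⟨z j / z₀ j, funext fun i => (algebraMap K L).injective ?_, hc₀⟩
  apply mul_left_cancel₀ hc
  rw [h i, hc₀, Pi.smul_apply, smul_eq_mul, map_mul, mul_assoc]

lemma smulAlgebraMap_ne_zero {c : L} (hc : c ≠ 0) {z : ι → K} (hz : z ≠ 0) :
    smulAlgebraMap (c, z) ≠ 0 := by
  obtain ⟨j, hj⟩ := Function.ne_iff.1 hz
  exact Function.ne_iff.2 ⟨j, mul_ne_zero hc ((map_ne_zero (algebraMap K L)).2 hj)⟩

variable [Fintype L] [Fintype ι] [DecidableEq L]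

lemma zero_notMem_image_smulAlgebraMap {C : Finset (ι → K)} (hC₀ : (0 : ι → K) ∉ C) :
    0 ∉ ((univ.erase (0 : L)) ×ˢ C).image smulAlgebraMap := by
  simp only [mem_image, mem_product, mem_erase, not_exists, not_and]
  rintro ⟨c, z⟩ ⟨⟨hc, -⟩, hz⟩
  exact smulAlgebraMap_ne_zero hc (ne_of_mem_of_not_mem hz hC₀)

variable [Fintype K] [DecidableEq K]

lemma card_fiber_smulAlgebraMap {C : Finset (ι → K)} (hC₀ : (0 : ι → K) ∉ C)
    (hC : ∀ α : K, α ≠ 0 → ∀ z ∈ C, α • z ∈ C) {t₀ : L × (ι → K)}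
    (ht₀ : t₀ ∈ (univ.erase (0 : L)) ×ˢ C) :
    #{t ∈ (univ.erase (0 : L)) ×ˢ C | smulAlgebraMap t = smulAlgebraMap t₀} =
      Fintype.card K - 1 := by
  obtain ⟨c₀, z₀⟩ := t₀
  simp only [mem_product, mem_erase, mem_univ, and_true] at ht₀
  have hz₀ : z₀ ≠ 0 := fun h => hC₀ (h ▸ ht₀.2)
  have h_eq : {t ∈ (univ.erase (0 : L)) ×ˢ C | smulAlgebraMap t = smulAlgebraMap (c₀, z₀)} =
      (univ.erase (0 : K)).image fun α => (c₀ * (algebraMap K L α)⁻¹, α • z₀) := by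
    ext ⟨c, z⟩
    simp only [mem_filter, mem_product, mem_erase, mem_univ, and_true, mem_image, ne_eq,
      Prod.mk.injEq]
    constructor
    · rintro ⟨⟨hc, hz⟩, h⟩
      obtain ⟨α, rfl, rfl⟩ := exists_eq_smul_of_mul_algebraMap_eq hc hz₀ (congrFun h)
      have hα : α ≠ 0 := by rintro rfl; exact hC₀ (by simpa using hz)
      refine ⟨α, hα, ?_, rfl⟩
      field_simp [(map_ne_zero (algebraMap K L)).2 hα]
    · rintro ⟨α, hα, rfl, rfl⟩
      have hα' := (map_ne_zero (algebraMap K L)).2 hα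
      refine ⟨⟨by simpa [hα'] using ht₀.1, hC α hα z₀ ht₀.2⟩, funext fun i => ?_⟩
      simp only [smulAlgebraMap, Pi.smul_apply, smul_eq_mul, map_mul]
      field_simp
  rw [h_eq, card_image_of_injOn, card_erase_of_mem (mem_univ _), card_univ]
  intro α _ β _ h
  exact smul_left_injective K hz₀ (Prod.ext_iff.1 h).2

lemma card_mul_card_image_smulAlgebraMap {C : Finset (ι → K)} (hC₀ : (0 : ι → K) ∉ C)
    (hC : ∀ α : K, α ≠ 0 → ∀ z ∈ C, α • z ∈ C) :
    #(((univ.erase (0 : L)) ×ˢ C).image smulAlgebraMap) * (Fintype.card K - 1) =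
      (Fintype.card L - 1) * #C := by
  rw [← card_univ (α := L), ← card_erase_of_mem (mem_univ (0 : L)), ← card_product,
    card_eq_sum_card_image smulAlgebraMap, ← smul_eq_mul, ← sum_const]
  refine sum_congr rfl fun x hx => ?_
  obtain ⟨t₀, ht₀, rfl⟩ := mem_image.1 hx
  exact (card_fiber_smulAlgebraMap hC₀ hC ht₀).symm

end ScalarExtension

section Solutions

variable {p : ℕ} [Fact p.Prime] {F ι : Type*} [Field F] [Algebra (ZMod p) F] [Fintype ι]
  {k : ℕ} {y : ι → ZMod p}

lemma sum_mul_sq_eq_zero_and_sum_mul_pow_eq_zero {c : F} {z : ι → ZMod p}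
    (hz : ∑ i, y i * z i ^ 2 = 0) :
    ∑ i, algebraMap (ZMod p) F (y i) * smulAlgebraMap (c, z) i ^ 2 = 0 ∧
      ∑ i, algebraMap (ZMod p) F (y i) * smulAlgebraMap (c, z) i ^ (p ^ k + 1) = 0 := by
  have h := congrArg (algebraMap (ZMod p) F) hz
  simp only [map_sum, map_mul, map_pow, map_zero] at h
  have h_sq : ∀ i, algebraMap (ZMod p) F (y i) * smulAlgebraMap (c, z) i ^ 2 =
      c ^ 2 * (algebraMap (ZMod p) F (y i) * algebraMap (ZMod p) F (z i) ^ 2) := fun i => by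
    simp only [smulAlgebraMap]
    ring
  have h_pow : ∀ i, algebraMap (ZMod p) F (y i) * smulAlgebraMap (c, z) i ^ (p ^ k + 1) =
      c ^ (p ^ k + 1) * (algebraMap (ZMod p) F (y i) * algebraMap (ZMod p) F (z i) ^ 2) :=
    fun i => by
    simp only [smulAlgebraMap]
    rw [mul_pow, pow_succ (algebraMap _ _ (z i)), ← map_pow, ZMod.pow_card_pow]
    ring
  simp only [sum_congr rfl fun i _ => h_sq i, sum_congr rfl fun i _ => h_pow i, ← mul_sum, h,
    mul_zero, and_self]

variable [Fintype F] [DecidableEq ι] {m : ℕ}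

lemma exists_eq_smulAlgebraMap_of_sum_eq_zero (hF : Fintype.card F = p ^ m)
    (hmk : Nat.gcd m k = 1) (hι : Fintype.card ι < 4) (hy : ∀ i, y i ≠ 0) {x : ι → F}
    (hx : x ≠ 0) (h₂ : ∑ i, algebraMap (ZMod p) F (y i) * x i ^ 2 = 0)
    (hd : ∑ i, algebraMap (ZMod p) F (y i) * x i ^ (p ^ k + 1) = 0) :
    ∃ c z, ∑ i, y i * z i ^ 2 = 0 ∧ x = smulAlgebraMap (c, z) := by
  have := charP_of_injective_algebraMap (algebraMap (ZMod p) F).injective p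
  have h_frob : ∑ i, algebraMap (ZMod p) F (y i) * (x i ^ p ^ k * x i ^ p ^ k) = 0 := by
    have h := congrArg (iterateFrobenius F p k) h₂
    simp only [map_sum, map_mul, map_pow, map_zero, iterateFrobenius_def] at h
    simpa only [← map_pow, ZMod.pow_card_pow, sq] using h
  obtain ⟨l, hl⟩ := exists_smul_eq_of_diagonal_isotropic hι
    (fun i => (map_ne_zero _).2 (hy i)) hx (by simpa only [sq] using h₂) h_frob
    (by simpa only [pow_succ, mul_comm] using hd)
  obtain ⟨j, hj : x j ≠ 0⟩ := Function.ne_iff.1 hx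
  have hl₀ : l ≠ 0 := by
    rintro rfl
    exact pow_ne_zero (p ^ k) hj (by simpa using (congrFun hl j).symm)
  have h_fix : ∀ i, (x i / x j) ^ p ^ k = x i / x j := fun i => by
    rw [div_pow, ← congrFun hl i, ← congrFun hl j]
    simp only [Pi.smul_apply, smul_eq_mul]
    field_simp
  choose z hz using fun i => exists_algebraMap_eq_of_pow_pow_eq_self hF hmk (h_fix i)
  refine ⟨x j, z, (algebraMap (ZMod p) F).injective ?_, funext fun i => ?_⟩
  · simp only [map_sum, map_mul, map_pow, hz, map_zero, div_pow, mul_div_assoc', ← sum_div, h₂,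
      zero_div]
  · simp only [smulAlgebraMap, hz]
    field_simp

lemma filter_eq_insert_image_smulAlgebraMap [DecidableEq F] (hF : Fintype.card F = p ^ m)
    (hmk : Nat.gcd m k = 1) (hι : Fintype.card ι < 4) (hy : ∀ i, y i ≠ 0) :
    ({x : ι → F | ∑ i, algebraMap (ZMod p) F (y i) * x i ^ 2 = 0 ∧
      ∑ i, algebraMap (ZMod p) F (y i) * x i ^ (p ^ k + 1) = 0} : Finset _) =
      insert 0 (((univ.erase 0) ×ˢ nonzeroIsotropicVectors y).image smulAlgebraMap) := by
  ext x
  simp only [mem_filter, mem_univ, true_and, mem_insert, mem_image, mem_product, mem_erase,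
    mem_nonzeroIsotropicVectors]
  constructor
  · rintro ⟨h₂, hd⟩
    refine or_iff_not_imp_left.2 fun hx => ?_
    obtain ⟨c, z, hz, rfl⟩ := exists_eq_smulAlgebraMap_of_sum_eq_zero hF hmk hι hy hx h₂ hd
    refine ⟨(c, z), ⟨⟨?_, trivial⟩, ?_, hz⟩, rfl⟩
    · rintro rfl
      exact hx (funext fun i => zero_mul _)
    · rintro rfl
      exact hx (funext fun i => by simp [smulAlgebraMap])
  · rintro (rfl | ⟨⟨c, z⟩, ⟨-, -, hz⟩, rfl⟩)
    · simp
    · exact sum_mul_sq_eq_zero_and_sum_mul_pow_eq_zero hz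

end Solutions

lemma card_solutions {p m k : ℕ} [Fact p.Prime] (hp : p ≠ 2) {F : Type*} [Field F] [Fintype F]
    [DecidableEq F] [Algebra (ZMod p) F] (hF : Fintype.card F = p ^ m) (hmk : Nat.gcd m k = 1)
    {y : Fin 3 → ZMod p} (hy : ∀ i, y i ≠ 0) :
    #{x : Fin 3 → F | ∑ i, algebraMap (ZMod p) F (y i) * x i ^ 2 = 0 ∧
      ∑ i, algebraMap (ZMod p) F (y i) * x i ^ (p ^ k + 1) = 0} = p ^ (m + 1) + p ^ m - p := by
  have h_img := card_mul_card_image_smulAlgebraMap (L := F)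
    (zero_notMem_nonzeroIsotropicVectors y) fun α hα _ => smul_mem_nonzeroIsotropicVectors hα
  rw [card_nonzeroIsotropicVectors (by rwa [ZMod.ringChar_zmod_n]) hy, hF, ZMod.card] at h_img
  rw [filter_eq_insert_image_smulAlgebraMap hF hmk (by simp) hy, card_insert_of_notMem
    (zero_notMem_image_smulAlgebraMap (zero_notMem_nonzeroIsotropicVectors y))]
  set N := #(((univ.erase (0 : F)) ×ˢ nonzeroIsotropicVectors y).image smulAlgebraMap)
  have hp₁ : 1 < p := (Fact.out : p.Prime).one_lt
  have hpm : 1 ≤ p ^ m := Nat.one_le_pow _ _ (by omega)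
  have hp2 : 1 ≤ p ^ 2 := Nat.one_le_pow _ _ (by omega)
  have hpm' : p ≤ p ^ (m + 1) := by rw [pow_succ]; exact Nat.le_mul_of_pos_left p hpm
  zify [hp₁.le, hpm, hp2, hpm'.trans (Nat.le_add_right _ (p ^ m))] at h_img ⊢
  have h_factor : ((N : ℤ) - (p ^ m - 1) * (p + 1)) * (p - 1) = 0 := by
    linear_combination h_img
  linear_combination (mul_eq_zero.1 h_factor).resolve_right (by omega)

lemma card_filter_forall_ne_zero {ι R : Type*} [Fintype ι] [DecidableEq ι] [Fintype R] [Zero R]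
    [DecidablePred fun y : ι → R => ∀ i, y i ≠ 0] :
    #{y : ι → R | ∀ i, y i ≠ 0} = (Fintype.card R - 1) ^ Fintype.card ι := by
  classical
  have h : ({y | ∀ i, y i ≠ 0} : Finset (ι → R)) = Fintype.piFinset fun _ => univ.erase 0 := by
    ext; simp
  rw [h, Fintype.card_piFinset, prod_const, card_erase_of_mem (mem_univ _), card_univ, card_univ]

theorem stmt_5_general (p m k : ℕ) [Fact p.Prime] (hp : Odd p) (hgcd : Nat.gcd m k = 1)
    (F : Type) [Field F] [Fintype F] [Algebra (ZMod p) F]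
    (hF : Fintype.card F = p ^ m) :
    Nat.card {s : (Fin 3 → F) × (Fin 3 → ZMod p) //
      (∀ i, s.2 i ≠ 0) ∧
      ∑ i, algebraMap (ZMod p) F (s.2 i) * s.1 i ^ 2 = 0 ∧
      ∑ i, algebraMap (ZMod p) F (s.2 i) * s.1 i ^ (p ^ k + 1) = 0} =
    (p - 1) ^ 3 * (p ^ (m + 1) + p ^ m - p) := by
  classical
  have hp₂ : p ≠ 2 := by rintro rfl; exact Nat.not_odd_iff_even.2 even_two hp
  have h_fiber : ∀ y : Fin 3 → ZMod p,
      #{x : Fin 3 → F | (∀ i, y i ≠ 0) ∧ ∑ i, algebraMap (ZMod p) F (y i) * x i ^ 2 = 0 ∧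
        ∑ i, algebraMap (ZMod p) F (y i) * x i ^ (p ^ k + 1) = 0} =
      if ∀ i, y i ≠ 0 then p ^ (m + 1) + p ^ m - p else 0 := fun y => by
    split_ifs with hy
    · rw [← card_solutions hp₂ hF hgcd hy]
      exact congrArg card (filter_congr fun x _ => and_iff_right hy)
    · simp [hy]
  rw [Nat.card_eq_fintype_card, Fintype.card_subtype, card_filter, Fintype.sum_prod_type_right]
  simp_rw [← card_filter, h_fiber]
  rw [sum_ite, sum_const, sum_const_zero, smul_eq_mul, add_zero, card_filter_forall_ne_zero,
    ZMod.card, Fintype.card_fin]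

/-- Lemma 3.3: the number of solutions `(x₁,x₂,x₃,y₁,y₂,y₃) ∈ F³ × (𝔽_p*)³` of
`y₁x₁² + y₂x₂² + y₃x₃² = 0` and `y₁x₁^{d₁} + y₂x₂^{d₁} + y₃x₃^{d₁} = 0`,
with `d₁ = p^k + 1`, is `(p-1)³·(p^{m+1} + p^m - p)`. -/
theorem stmt_5 (p m k : ℕ) [Fact p.Prime] (hp : Odd p) (hm5 : 5 ≤ m) (hm : Odd m)
    (hk : 0 < k) (hgcd : Nat.gcd m k = 1)
    (F : Type) [Field F] [Fintype F] [Algebra (ZMod p) F]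
    (hF : Fintype.card F = p ^ m) :
    Nat.card {s : (Fin 3 → F) × (Fin 3 → ZMod p) //
      (∀ i, s.2 i ≠ 0) ∧
      ∑ i, algebraMap (ZMod p) F (s.2 i) * s.1 i ^ 2 = 0 ∧
      ∑ i, algebraMap (ZMod p) F (s.2 i) * s.1 i ^ (p ^ k + 1) = 0} =
    (p - 1) ^ 3 * (p ^ (m + 1) + p ^ m - p) :=
  stmt_5_general p m k hp hgcd F hF
end

section
/- The number of pairs (u,v) ∈ F² such that D(u,v,0) = (p-1)·p^m is exactly 1 (namely (u,v) = (0,0)). -/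
/-- `D(u,v,w) = ∑_{y ∈ 𝔽_p*} ∑_{x ∈ F} ζ_p^{y·Tr(ux² + vx^{p^k+1} + wx^{p^{2k}+1})}`. -/
noncomputable def Dsum (p k : ℕ) [NeZero p] (F : Type) [Field F] [Fintype F]
    [Algebra (ZMod p) F] (u v w : F) : ℂ :=
  ∑ y ∈ ({0}ᶜ : Finset (ZMod p)), ∑ x : F,
    zetaC p (y * Algebra.trace (ZMod p) F
      (u * x ^ 2 + v * x ^ (p ^ k + 1) + w * x ^ (p ^ (2 * k) + 1)))

/-! Every summand of `D(u,v,0)` is a root of unity, so `D(u,v,0) = (p-1)p^m` forces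
`Tr(u x² + v x^{p^k+1}) = 0` for all `x`. With `σ = Frob^k` the form is `u x² + v x σ(x)`;
polarising and moving `σ` across the trace (`Tr(v x σ(y)) = Tr(σ⁻¹(v x) y)`), nondegeneracy of the
trace form gives `2u x + v σ(x) + σ⁻¹(v) σ⁻¹(x) = 0` for all `x`. As `gcd(m, 2k) = 1`, the
automorphisms `1, σ, σ⁻¹` are distinct, and Dedekind's independence of characters gives
`u = v = 0`. -/

open scoped ComplexOrder in
theorem Complex.sum_eq_card_iff {ι : Type*} {s : Finset ι} {z : ι → ℂ}
    (hz : ∀ i ∈ s, ‖z i‖ ≤ 1) :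
    ∑ i ∈ s, z i = s.card ↔ ∀ i ∈ s, z i = 1 := by
  refine ⟨fun h => ?_, fun h => by simp [Finset.sum_congr rfl h]⟩
  have hre_le : ∀ i ∈ s, (z i).re ≤ 1 := fun i hi => (re_le_norm _).trans (hz i hi)
  have hre : ∀ i ∈ s, (z i).re = 1 := by
    refine (Finset.sum_eq_sum_iff_of_le hre_le).mp ?_
    simpa using congrArg re h
  intro i hi
  have hnonneg : 0 ≤ z i :=
    re_eq_norm.mp (le_antisymm (re_le_norm _) (by linarith [hz i hi, hre i hi]))
  exact ext (hre i hi) (nonneg_iff.mp hnonneg).2.symm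

section Zeta

variable (p : ℕ) [NeZero p]

theorem zetaC_eq_stdAddChar (a : ZMod p) : zetaC p a = ZMod.stdAddChar a := by
  rw [ZMod.stdAddChar_apply, ZMod.toCircle_apply]
  rfl

theorem zetaC_eq_one_iff {a : ZMod p} : zetaC p a = 1 ↔ a = 0 := by
  rw [zetaC_eq_stdAddChar, ← AddChar.map_zero_eq_one (ZMod.stdAddChar (N := p)),
    ZMod.injective_stdAddChar.eq_iff]

theorem norm_zetaC (a : ZMod p) : ‖zetaC p a‖ = 1 := by
  rw [zetaC_eq_stdAddChar, ZMod.stdAddChar_apply]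
  exact Circle.norm_coe _

end Zeta

theorem Dsum_eq_iff (p k : ℕ) [Fact p.Prime] (F : Type) [Field F] [Fintype F]
    [Algebra (ZMod p) F] (u v w : F) :
    Dsum p k F u v w = ((p : ℂ) - 1) * Fintype.card F ↔
      ∀ x : F, Algebra.trace (ZMod p) F
        (u * x ^ 2 + v * x ^ (p ^ k + 1) + w * x ^ (p ^ (2 * k) + 1)) = 0 := by
  have hcard : ((p : ℂ) - 1) * Fintype.card F =
      (((({0}ᶜ : Finset (ZMod p)) ×ˢ (Finset.univ : Finset F)).card : ℕ) : ℂ) := by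
    rw [Finset.card_product, Finset.card_compl, Finset.card_singleton, ZMod.card,
      Finset.card_univ, Nat.cast_mul, Nat.cast_sub (Fact.out : p.Prime).one_le]
    push_cast
    ring
  rw [Dsum, ← Finset.sum_product', hcard,
    Complex.sum_eq_card_iff fun _ _ => (norm_zetaC p _).le]
  simp only [zetaC_eq_one_iff, Finset.mem_product, Finset.mem_compl, Finset.mem_singleton,
    Finset.mem_univ, and_true, mul_eq_zero, Prod.forall]
  exact ⟨fun h x => (h 1 x one_ne_zero).resolve_left one_ne_zero,
    fun h _ x _ => Or.inr (h x)⟩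

section Galois

variable {K L : Type*} [Field K] [Field L] [Algebra K L]

theorem AlgEquiv.eq_zero_of_forall_mul_add_mul_apply_add_mul_inv_apply {σ : L ≃ₐ[K] L}
    (hσ : σ ^ 2 ≠ 1) {a b c : L} (h : ∀ x, a * x + b * σ x + c * σ⁻¹ x = 0) :
    a = 0 ∧ b = 0 ∧ c = 0 := by
  have hσ1 : σ ≠ 1 := fun h1 => hσ (by rw [h1, one_pow])
  have hσinv : σ ≠ σ⁻¹ := fun h1 => hσ (by rw [pow_two, mul_eq_one_iff_eq_inv]; exact h1)
  have hinj : Function.Injective ![1, σ, σ⁻¹] := by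
    intro i j hij
    fin_cases i <;> fin_cases j <;> simp_all [eq_comm (a := σ), eq_comm (b := σ⁻¹)]
  have hli := (linearIndependent_algHom_toLinearMap K L L).comp
    ((↑) ∘ ![1, σ, σ⁻¹]) (AlgEquiv.coe_toAlgHom_injective.comp hinj)
  have hcoef := Fintype.linearIndependent_iff.mp hli ![a, b, c] (by
    ext x
    simpa [Fin.sum_univ_three] using h x)
  exact ⟨hcoef 0, hcoef 1, hcoef 2⟩

variable [FiniteDimensional K L] [Algebra.IsSeparable K L]

theorem forall_mul_add_mul_apply_add_mul_inv_apply_eq_zero_of_trace_eq_zero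
    {σ : L ≃ₐ[K] L} {u v : L} (h : ∀ x, Algebra.trace K L (u * x ^ 2 + v * (x * σ x)) = 0)
    (x : L) : 2 * u * x + v * σ x + σ⁻¹ v * σ⁻¹ x = 0 := by
  refine (traceForm_nondegenerate K L).1 _ fun y => ?_
  have hpolar : Algebra.trace K L (2 * u * x * y + v * σ x * y + v * x * σ y) = 0 := by
    have := h (x + y)
    rw [show u * (x + y) ^ 2 + v * ((x + y) * σ (x + y)) =
        (u * x ^ 2 + v * (x * σ x)) + (u * y ^ 2 + v * (y * σ y)) +
          (2 * u * x * y + v * σ x * y + v * x * σ y) by rw [map_add]; ring,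
      map_add, map_add, h x, h y, zero_add, zero_add] at this
    exact this
  have hshift : Algebra.trace K L (σ⁻¹ v * σ⁻¹ x * y) = Algebra.trace K L (v * x * σ y) := by
    rw [← Algebra.trace_eq_of_algEquiv σ (σ⁻¹ v * σ⁻¹ x * y), map_mul σ, map_mul σ,
      AlgEquiv.aut_inv, AlgEquiv.apply_symm_apply, AlgEquiv.apply_symm_apply]
  rw [Algebra.traceForm_apply]
  simpa only [add_mul, map_add, hshift] using hpolar

theorem eq_zero_of_trace_mul_sq_add_mul_mul_apply_eq_zero {σ : L ≃ₐ[K] L} (hσ : σ ^ 2 ≠ 1)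
    (h2 : (2 : L) ≠ 0) {u v : L}
    (h : ∀ x, Algebra.trace K L (u * x ^ 2 + v * (x * σ x)) = 0) : u = 0 ∧ v = 0 := by
  obtain ⟨hu, hv, -⟩ := AlgEquiv.eq_zero_of_forall_mul_add_mul_apply_add_mul_inv_apply hσ
    (forall_mul_add_mul_apply_add_mul_inv_apply_eq_zero_of_trace_eq_zero h)
  exact ⟨(mul_eq_zero.mp hu).resolve_left h2, hv⟩

end Galois

theorem FiniteField.frobeniusAlgEquivOfAlgebraic_pow_eq_one_iff {K L : Type*} [Field K]
    [Fintype K] [Field L] [Fintype L] [Algebra K L] {n : ℕ}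
    (hL : Fintype.card L = Fintype.card K ^ n) (j : ℕ) :
    frobeniusAlgEquivOfAlgebraic K L ^ j = 1 ↔ n ∣ j := by
  have hrank : Module.finrank K L = n := by
    rw [Module.card_eq_pow_finrank (K := K)] at hL
    exact Nat.pow_right_injective (Fintype.one_lt_card (α := K)) hL
  rw [← hrank, ← orderOf_frobeniusAlgEquivOfAlgebraic, orderOf_dvd_iff_pow_eq_one]

theorem two_ne_zero_of_odd_of_algebra_zmod {p : ℕ} [Fact p.Prime] (hp : Odd p) (F : Type*)
    [Field F] [Algebra (ZMod p) F] : (2 : F) ≠ 0 := by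
  have := charP_of_injective_algebraMap' (ZMod p) (A := F) p
  refine Ring.two_ne_zero fun hchar => ?_
  rw [ringChar.eq F p] at hchar
  exact Nat.not_even_iff_odd.mpr hp (hchar ▸ even_two)

theorem stmt_9_general (p m k : ℕ) [Fact p.Prime] (hp : Odd p) (hm5 : 5 ≤ m) (hm : Odd m)
    (hgcd : Nat.gcd m k = 1)
    (F : Type) [Field F] [Fintype F] [Algebra (ZMod p) F]
    (hF : Fintype.card F = p ^ m) :
    Nat.card {uv : F × F //
      Dsum p k F uv.1 uv.2 0 = ((p : ℂ) - 1) * (p : ℂ) ^ m} = 1 := by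
  set σ := FiniteField.frobeniusAlgEquivOfAlgebraic (ZMod p) F ^ k
  have hσ : ∀ x : F, σ x = x ^ p ^ k := fun x => by
    rw [AlgEquiv.coe_pow, FiniteField.coe_frobeniusAlgEquivOfAlgebraic_iterate, ZMod.card]
  have hσ2 : σ ^ 2 ≠ 1 := by
    rw [← pow_mul, ne_eq,
      FiniteField.frobeniusAlgEquivOfAlgebraic_pow_eq_one_iff (by rw [hF, ZMod.card])]
    intro hdvd
    have := (Nat.coprime_two_right.mpr hm).mul_right hgcd |>.eq_one_of_dvd (mul_comm k 2 ▸ hdvd)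
    omega
  have hsolutions : ∀ uv : F × F,
      Dsum p k F uv.1 uv.2 0 = ((p : ℂ) - 1) * (p : ℂ) ^ m ↔ uv = (0, 0) := by
    rintro ⟨u, v⟩
    rw [← Nat.cast_pow, ← hF, Dsum_eq_iff, Prod.mk.injEq]
    refine ⟨fun h => eq_zero_of_trace_mul_sq_add_mul_mul_apply_eq_zero hσ2
      (two_ne_zero_of_odd_of_algebra_zmod hp F) fun x => ?_,
      fun ⟨hu, hv⟩ x => by simp [hu, hv]⟩
    simpa [hσ, pow_succ'] using h x
  simp [hsolutions]

/-- The number of pairs `(u,v) ∈ F²` with `D(u,v,0) = (p-1)·p^m` is exactly `1`. -/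
theorem stmt_9 (p m k : ℕ) [Fact p.Prime] (hp : Odd p) (hm5 : 5 ≤ m) (hm : Odd m)
    (hk : 0 < k) (hgcd : Nat.gcd m k = 1)
    (F : Type) [Field F] [Fintype F] [Algebra (ZMod p) F]
    (hF : Fintype.card F = p ^ m) :
    Nat.card {uv : F × F //
      Dsum p k F uv.1 uv.2 0 = ((p : ℂ) - 1) * (p : ℂ) ^ m} = 1 :=
  stmt_9_general p m k hp hm5 hm hgcd F hF
end

section
/- For any fixed w ∈ F with w ≠ 0, one has ∑_{(u,v) ∈ F²} D(u,v,w)² = (p−1)²·p^{3m}. -/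
/-!
Write `q = p^m`, `ψ = ζ_p^{Tr(·)}` and `ι : 𝔽_p → F`. Expanding `D(u,v,w)²` as a sum over
`((y₁, x₁), (y₂, x₂))` with `y₁, y₂ ≠ 0` and summing over `u, v` first, orthogonality of the
primitive character `ψ` leaves `q²` for each point with
`ι y₁ x₁² + ι y₂ x₂² = 0 = ι y₁ x₁^{p^k+1} + ι y₂ x₂^{p^k+1}` and `0` otherwise; at such a
point the `w`-term `ι y₁ x₁^{p^{2k}+1} + ι y₂ x₂^{p^{2k}+1}` vanishes too. If `x₁ ≠ 0`, the ratio
`t = x₂ / x₁` satisfies `y₁ = -y₂ t²` and `t^{p^k} = t`, so `t ∈ 𝔽_p^*` since `gcd(m, k) = 1`.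
Hence every fibre over `x₁` has `(p - 1)²` points and the sum is `q² · q (p - 1)²`.
-/

open Finset Function

theorem AddChar.sum_sum_apply_mul_add_mul_add {R R' : Type*} [CommRing R] [Fintype R]
    [DecidableEq R] [CommRing R'] [IsDomain R'] {ψ : AddChar R R'} (hψ : ψ.IsPrimitive)
    (a b c : R) :
    ∑ u, ∑ v, ψ (u * a + v * b + c) =
      if a = 0 ∧ b = 0 then (Fintype.card R : R') ^ 2 * ψ c else 0 := by
  simp_rw [AddChar.map_add_eq_mul, ← Finset.sum_mul, ← Finset.mul_sum, ← Finset.sum_mul,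
    AddChar.sum_mulShift _ hψ]
  by_cases ha : a = 0 <;> by_cases hb : b = 0 <;> simp [ha, hb, sq]

section Algebra

variable {K : Type*} [Field K] {n : ℕ} {c₁ c₂ x₁ x₂ : K}

theorem pow_eq_self_of_pow_succ_eq_sq {t : K} (ht : t ≠ 0) (h : t ^ (n + 1) = t ^ 2) :
    t ^ n = t :=
  mul_right_cancel₀ ht (by rw [← pow_succ, h, sq])

theorem pow_sq_succ_eq_sq_of_pow_succ_eq_sq {t : K} (h : t ^ (n + 1) = t ^ 2) :
    t ^ (n ^ 2 + 1) = t ^ 2 := by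
  rcases eq_or_ne t 0 with rfl | ht
  · simp
  have htn := pow_eq_self_of_pow_succ_eq_sq ht h
  rw [sq n, pow_succ, pow_mul, htn, htn, sq]

theorem mul_sq_add_mul_sq_eq_zero_and_iff (hx₁ : x₁ ≠ 0) (hc₂ : c₂ ≠ 0) :
    (c₁ * x₁ ^ 2 + c₂ * x₂ ^ 2 = 0 ∧ c₁ * x₁ ^ (n + 1) + c₂ * x₂ ^ (n + 1) = 0) ↔
      c₁ = -c₂ * (x₂ / x₁) ^ 2 ∧ (x₂ / x₁) ^ (n + 1) = (x₂ / x₁) ^ 2 := by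
  obtain ⟨t, rfl⟩ : ∃ t, x₂ = t * x₁ := ⟨x₂ / x₁, (div_mul_cancel₀ x₂ hx₁).symm⟩
  have factor : ∀ j, c₁ * x₁ ^ j + c₂ * (t * x₁) ^ j = (c₁ + c₂ * t ^ j) * x₁ ^ j := fun j ↦ by
    ring
  simp only [factor, mul_eq_zero, pow_eq_zero_iff', hx₁, false_and, or_false,
    mul_div_cancel_right₀ t hx₁]
  constructor
  · rintro ⟨h₂, hn⟩
    exact ⟨by linear_combination h₂, mul_left_cancel₀ hc₂ (by linear_combination hn - h₂)⟩
  · rintro ⟨h₂, hn⟩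
    exact ⟨by linear_combination h₂, by linear_combination h₂ + c₂ * hn⟩

theorem mul_pow_sq_succ_add_eq_zero (hc₂ : c₂ ≠ 0) (h₂ : c₁ * x₁ ^ 2 + c₂ * x₂ ^ 2 = 0)
    (hn : c₁ * x₁ ^ (n + 1) + c₂ * x₂ ^ (n + 1) = 0) :
    c₁ * x₁ ^ (n ^ 2 + 1) + c₂ * x₂ ^ (n ^ 2 + 1) = 0 := by
  rcases eq_or_ne x₁ 0 with rfl | hx₁
  · obtain rfl : x₂ = 0 := by simpa [hc₂] using h₂
    simp
  obtain ⟨hc₁, ht⟩ := (mul_sq_add_mul_sq_eq_zero_and_iff hx₁ hc₂).1 ⟨h₂, hn⟩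
  exact ((mul_sq_add_mul_sq_eq_zero_and_iff hx₁ hc₂).2
    ⟨hc₁, pow_sq_succ_eq_sq_of_pow_succ_eq_sq ht⟩).2

end Algebra

section FiniteField

variable {p : ℕ} [Fact p.Prime] {F : Type*} [Field F] [Algebra (ZMod p) F]

theorem mem_range_algebraMap_of_pow_eq_self [Finite F] {t : F} (ht : t ^ p = t) :
    t ∈ Set.range (algebraMap (ZMod p) F) := by
  rw [IsGalois.mem_range_algebraMap_iff_fixed]
  intro σ
  obtain ⟨n, rfl⟩ := (FiniteField.bijective_frobeniusAlgEquivOfAlgebraic_pow (ZMod p) F).2 σ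
  rw [AlgEquiv.coe_pow, FiniteField.coe_frobeniusAlgEquivOfAlgebraic, ZMod.card]
  exact iterate_fixed ht _

theorem mem_range_algebraMap_of_pow_pow_eq_self [Fintype F] {m k : ℕ}
    (hF : Fintype.card F = p ^ m) (hmk : m.gcd k = 1) {t : F} (ht : t ^ p ^ k = t) :
    t ∈ Set.range (algebraMap (ZMod p) F) := by
  have hm : IsPeriodicPt (· ^ p) m t := by
    rw [IsPeriodicPt, IsFixedPt, pow_iterate, ← hF]
    exact FiniteField.pow_card t
  have hk : IsPeriodicPt (· ^ p) k t := by rwa [IsPeriodicPt, IsFixedPt, pow_iterate]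
  have h1 : IsPeriodicPt (· ^ p) 1 t := hmk ▸ hm.gcd hk
  exact mem_range_algebraMap_of_pow_eq_self (by simpa [IsPeriodicPt, IsFixedPt] using h1)

theorem algebraMap_pow_pow_succ (s : ZMod p) (k : ℕ) :
    algebraMap (ZMod p) F s ^ (p ^ k + 1) = algebraMap (ZMod p) F s ^ 2 := by
  rw [← map_pow, ← map_pow, pow_succ, ZMod.pow_card_pow, sq]

variable (p F) in
noncomputable def traceAddChar : AddChar F ℂ :=
  ZMod.stdAddChar.compAddMonoidHom (Algebra.trace (ZMod p) F).toAddMonoidHom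

theorem isPrimitive_traceAddChar [Finite F] : (traceAddChar p F).IsPrimitive := by
  refine AddChar.IsPrimitive.of_ne_one fun h ↦ ?_
  obtain ⟨a, ha⟩ := Algebra.trace_surjective (ZMod p) F 1
  have := DFunLike.congr_fun h a
  rw [traceAddChar, AddChar.compAddMonoidHom_apply, LinearMap.toAddMonoidHom_coe, ha,
    AddChar.one_apply, ← AddChar.map_zero_eq_one (ZMod.stdAddChar (N := p))] at this
  exact one_ne_zero (ZMod.injective_stdAddChar this)

theorem zetaC_mul_trace (y : ZMod p) (z : F) :
    zetaC p (y * Algebra.trace (ZMod p) F z) = traceAddChar p F (algebraMap (ZMod p) F y * z) := by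
  rw [traceAddChar, AddChar.compAddMonoidHom_apply, LinearMap.toAddMonoidHom_coe,
    ← Algebra.smul_def, map_smul, smul_eq_mul, ZMod.stdAddChar_apply, ZMod.toCircle_apply]
  rfl

end FiniteField

def diagForm {R A : Type*} [CommSemiring R] [Semiring A] [Algebra R A] (n : ℕ)
    (ω : (R × A) × (R × A)) : A :=
  algebraMap R A ω.1.1 * ω.1.2 ^ n + algebraMap R A ω.2.1 * ω.2.2 ^ n

theorem diagForm_pow_sq_succ_eq_zero {R K : Type*} [Field R] [Field K] [Algebra R K] {n : ℕ}
    {ω : (R × K) × (R × K)} (hω : ω.2.1 ≠ 0) (h₂ : diagForm 2 ω = 0)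
    (hn : diagForm (n + 1) ω = 0) : diagForm (n ^ 2 + 1) ω = 0 :=
  mul_pow_sq_succ_add_eq_zero ((map_ne_zero _).2 hω) h₂ hn

section Count

variable {p : ℕ} [Fact p.Prime] {F : Type*} [Field F] [Fintype F] [Algebra (ZMod p) F]

local notation "Y" => ({0}ᶜ : Finset (ZMod p))
local notation "ι" => algebraMap (ZMod p) F

variable (p F) in
def weightedPairs : Finset ((ZMod p × F) × (ZMod p × F)) := (Y ×ˢ univ) ×ˢ (Y ×ˢ univ)

variable [DecidableEq F]

theorem commonZeros_fiber_zero (k : ℕ) :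
    {ω ∈ weightedPairs p F |
      (diagForm 2 ω = 0 ∧ diagForm (p ^ k + 1) ω = 0) ∧ ω.1.2 = 0} =
      (Y ×ˢ Y).image fun c ↦ ((c.1, 0), (c.2, 0)) := by
  ext ⟨⟨y₁, x₁⟩, y₂, x₂⟩ : 1
  simp only [Finset.mem_filter, mem_image]
  simp only [weightedPairs, mem_product, mem_compl, mem_singleton, mem_univ, and_true, diagForm,
    Prod.mk.injEq, Prod.exists]
  constructor
  · rintro ⟨⟨hy₁, hy₂⟩, ⟨h₂, -⟩, rfl⟩
    obtain rfl : x₂ = 0 := by simpa [hy₂] using h₂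
    exact ⟨y₁, y₂, ⟨hy₁, hy₂⟩, ⟨rfl, rfl⟩, rfl, rfl⟩
  · rintro ⟨y₁, y₂, hy, ⟨rfl, rfl⟩, rfl, rfl⟩
    simpa using hy

theorem commonZeros_fiber_of_ne_zero {m k : ℕ} (hF : Fintype.card F = p ^ m)
    (hmk : m.gcd k = 1) {x₁ : F} (hx₁ : x₁ ≠ 0) :
    {ω ∈ weightedPairs p F |
      (diagForm 2 ω = 0 ∧ diagForm (p ^ k + 1) ω = 0) ∧ ω.1.2 = x₁} =
      (Y ×ˢ Y).image fun c ↦ ((-c.2 * c.1 ^ 2, x₁), (c.2, ι c.1 * x₁)) := by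
  ext ⟨⟨y₁, x₁'⟩, y₂, x₂⟩ : 1
  simp only [Finset.mem_filter, mem_image]
  simp only [weightedPairs, mem_product, mem_compl, mem_singleton, mem_univ, and_true, diagForm,
    Prod.mk.injEq, Prod.exists]
  constructor
  · rintro ⟨⟨hy₁, hy₂⟩, hP, rfl⟩
    obtain ⟨hc, ht⟩ := (mul_sq_add_mul_sq_eq_zero_and_iff hx₁ ((map_ne_zero _).2 hy₂)).1 hP
    have ht₀ : x₂ / x₁' ≠ 0 := by
      rintro h
      exact hy₁ (by simpa [h] using hc)
    obtain ⟨s, hs⟩ := mem_range_algebraMap_of_pow_pow_eq_self hF hmk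
      (pow_eq_self_of_pow_succ_eq_sq ht₀ ht)
    refine ⟨s, y₂, ⟨?_, hy₂⟩, ⟨?_, rfl⟩, rfl, ?_⟩
    · rintro rfl
      exact ht₀ (by rw [← hs, map_zero])
    · apply (algebraMap (ZMod p) F).injective
      simp [hc, hs]
    · rw [hs, div_mul_cancel₀ _ hx₁]
  · rintro ⟨s, b, ⟨hs, hb⟩, ⟨rfl, rfl⟩, rfl, rfl⟩
    refine ⟨⟨by simp [hs, hb], hb⟩,
      (mul_sq_add_mul_sq_eq_zero_and_iff hx₁ ((map_ne_zero _).2 hb)).2 ?_, rfl⟩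
    rw [mul_div_cancel_right₀ _ hx₁, algebraMap_pow_pow_succ]
    simp

theorem card_commonZeros {m k : ℕ} (hF : Fintype.card F = p ^ m) (hmk : m.gcd k = 1) :
    #{ω ∈ weightedPairs p F | diagForm 2 ω = 0 ∧ diagForm (p ^ k + 1) ω = 0} =
      Fintype.card F * (p - 1) ^ 2 := by
  have hY : #(Y ×ˢ Y) = (p - 1) ^ 2 := by
    rw [card_product, card_compl, card_singleton, ZMod.card, sq]
  rw [card_eq_sum_card_fiberwise (f := fun ω ↦ ω.1.2) (t := univ) (fun _ _ ↦ mem_univ _),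
    ← smul_eq_mul, ← card_univ, ← sum_const]
  refine sum_congr rfl fun x₁ _ ↦ ?_
  rw [filter_filter]
  rcases eq_or_ne x₁ 0 with rfl | hx₁
  · rw [commonZeros_fiber_zero, card_image_of_injective _ (fun c c' h ↦ by aesop), hY]
  · rw [commonZeros_fiber_of_ne_zero hF hmk hx₁,
      card_image_of_injective _ (fun c c' h ↦ ?_), hY]
    simp only [Prod.mk.injEq, mul_left_inj' hx₁] at h
    exact Prod.ext ((algebraMap (ZMod p) F).injective h.2.2) h.2.1

end Count

theorem Dsum_sq {p : ℕ} [Fact p.Prime] {F : Type} [Field F] [Fintype F] [Algebra (ZMod p) F]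
    (k : ℕ) (u v w : F) :
    Dsum p k F u v w ^ 2 = ∑ ω ∈ weightedPairs p F, traceAddChar p F
      (u * diagForm 2 ω + v * diagForm (p ^ k + 1) ω + w * diagForm (p ^ (2 * k) + 1) ω) := by
  rw [Dsum, weightedPairs, ← sum_product', sq, sum_mul_sum, ← sum_product']
  refine sum_congr rfl fun ω _ ↦ ?_
  rw [zetaC_mul_trace, zetaC_mul_trace, ← AddChar.map_add_eq_mul, diagForm, diagForm, diagForm]
  congr 1
  ring

theorem stmt_13_general (p m k : ℕ) [Fact p.Prime]
    (hgcd : Nat.gcd m k = 1)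
    (F : Type) [Field F] [Fintype F] [Algebra (ZMod p) F]
    (hF : Fintype.card F = p ^ m) (w : F) :
    ∑ u : F, ∑ v : F, (Dsum p k F u v w) ^ 2 =
      ((p : ℂ) - 1) ^ 2 * (p : ℂ) ^ (3 * m) := by
  classical
  have hp2k : p ^ (2 * k) = (p ^ k) ^ 2 := by rw [← pow_mul, mul_comm]
  calc ∑ u : F, ∑ v : F, Dsum p k F u v w ^ 2
      = ∑ ω ∈ weightedPairs p F, ∑ u : F, ∑ v : F, traceAddChar p F
          (u * diagForm 2 ω + v * diagForm (p ^ k + 1) ω + w * diagForm (p ^ (2 * k) + 1) ω) := by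
        simp_rw [Dsum_sq]
        exact (sum_congr rfl fun _ _ ↦ sum_comm).trans sum_comm
    _ = ∑ ω ∈ weightedPairs p F,
          if diagForm 2 ω = 0 ∧ diagForm (p ^ k + 1) ω = 0 then (Fintype.card F : ℂ) ^ 2
          else 0 := by
        refine sum_congr rfl fun ω hω ↦ ?_
        rw [AddChar.sum_sum_apply_mul_add_mul_add isPrimitive_traceAddChar]
        split_ifs with h
        · have hω₂ : ω.2.1 ≠ 0 := by simp_all [weightedPairs]
          rw [hp2k, diagForm_pow_sq_succ_eq_zero hω₂ h.1 h.2, mul_zero, AddChar.map_zero_eq_one,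
            mul_one]
        · rfl
    _ = (Fintype.card F : ℂ) ^ 2 *
          #{ω ∈ weightedPairs p F | diagForm 2 ω = 0 ∧ diagForm (p ^ k + 1) ω = 0} := by
        rw [← sum_filter, sum_const, nsmul_eq_mul, mul_comm]
    _ = ((p : ℂ) - 1) ^ 2 * (p : ℂ) ^ (3 * m) := by
        rw [card_commonZeros hF hgcd, hF]
        push_cast [Nat.cast_sub (Fact.out : p.Prime).one_le]
        ring

/-- For fixed `w ≠ 0`, `∑_{(u,v) ∈ F²} D(u,v,w)² = (p-1)²·p^{3m}`. -/
theorem stmt_13 (p m k : ℕ) [Fact p.Prime] (hp : Odd p) (hm5 : 5 ≤ m) (hm : Odd m)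
    (hk : 0 < k) (hgcd : Nat.gcd m k = 1)
    (F : Type) [Field F] [Fintype F] [Algebra (ZMod p) F]
    (hF : Fintype.card F = p ^ m) (w : F) (hw : w ≠ 0) :
    ∑ u : F, ∑ v : F, (Dsum p k F u v w) ^ 2 =
      ((p : ℂ) - 1) ^ 2 * (p : ℂ) ^ (3 * m) :=
  stmt_13_general p m k hgcd F hF w
end
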